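/- arXiv:2003.03559 — 11 statements merged into one kernel-verified Lean document; each statement's English description precedes it below -/
import Mathlib

section
/- Let L : Matrix (Fin n) (Fin n) ℝ satisfy L.mulVec 𝟙 = 0, have nonpositive off-diagonal entries (L i j ≤ 0 for i ≠ j), and suppose the directed graph with an edge from i to j whenever i ≠ j and L i j ≠ 0 is strongly connected (for all i, j, Relation.ReflTransGen (fun a b => a ≠ b ∧ L a b ≠ 0) i j). Then there exists a vector m : Fin n → ℝ with m i > 0 for all i such that Matrix.vecMul 𝟙 (Matrix.diagonal m * L) = 0; that is, the diagonally rescaled matrix Matrix.diagonal m * L is the Laplacian of a balanced graph (zero row sums and zero column sums). -/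
open Matrix Finset

/-- A Laplacian matrix (zero row sums, nonpositive off-diagonal entries) whose
off-diagonal nonzero pattern is strongly connected can be rescaled by a positive diagonal
matrix so that the result also has zero column sums (balanced graph representation). -/
theorem exists_positive_diagonal_balancing
    (n : ℕ) (L : Matrix (Fin n) (Fin n) ℝ)
    (hrow : L.mulVec (fun _ => 1) = 0)
    (hoff : ∀ i j : Fin n, i ≠ j → L i j ≤ 0)
    (hconn : ∀ i j : Fin n, Relation.ReflTransGen (fun a b => a ≠ b ∧ L a b ≠ 0) i j) :
    ∃ m : Fin n → ℝ, (∀ i, 0 < m i) ∧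
      Matrix.vecMul (fun _ => 1) (Matrix.diagonal m * L) = 0 := by
  rcases Nat.eq_zero_or_pos n with hn | hn
  · subst hn
    exact ⟨fun _ => 1, fun i => i.elim0, funext fun j => j.elim0⟩
  have hrow' : ∀ i, ∑ k, L i k = 0 := by
    intro i
    have := congrFun hrow i
    simpa [Matrix.mulVec, dotProduct] using this
  have hdiag : ∀ j, 0 ≤ L j j := by
    intro j
    have h := hrow' j
    rw [← Finset.add_sum_erase _ _ (mem_univ j)] at h
    have h2 : ∑ i ∈ univ.erase j, L j i ≤ 0 :=
      Finset.sum_nonpos fun i hi => hoff j i (Ne.symm (Finset.ne_of_mem_erase hi))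
    linarith
  have hdet : L.det = 0 := by
    have h1 : (fun _ => (1:ℝ)) ≠ (0 : Fin n → ℝ) := by
      intro h
      have := congrFun h ⟨0, hn⟩
      simp at this
    exact (Matrix.exists_mulVec_eq_zero_iff).mp ⟨_, h1, hrow⟩
  obtain ⟨v, hv0, hvL⟩ := (Matrix.exists_mulVec_eq_zero_iff (M := Lᵀ)).mpr (by simpa using hdet)
  rw [Matrix.mulVec_transpose] at hvL
  set w : Fin n → ℝ := fun i => |v i| with hw
  have hvj : ∀ j, ∑ i, v i * L i j = 0 := by
    intro j
    have := congrFun hvL j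
    simpa [Matrix.vecMul, dotProduct] using this
  have hle : ∀ j, ∑ i, w i * L i j ≤ 0 := by
    intro j
    rw [← Finset.add_sum_erase _ _ (mem_univ j)]
    have h1 : v j * L j j = -∑ i ∈ univ.erase j, v i * L i j := by
      have := hvj j
      rw [← Finset.add_sum_erase _ _ (mem_univ j)] at this
      linarith
    have h2 : w j * L j j = |v j * L j j| := by
      rw [abs_mul, abs_of_nonneg (hdiag j)]
    have h3 : |v j * L j j| ≤ -∑ i ∈ univ.erase j, w i * L i j := by
      rw [h1, abs_neg]
      calc |∑ i ∈ univ.erase j, v i * L i j| ≤ ∑ i ∈ univ.erase j, |v i * L i j| :=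
            Finset.abs_sum_le_sum_abs _ _
        _ = -∑ i ∈ univ.erase j, w i * L i j := by
            rw [← Finset.sum_neg_distrib]
            refine Finset.sum_congr rfl fun i hi => ?_
            rw [abs_mul, abs_of_nonpos (hoff i j (Finset.ne_of_mem_erase hi)), hw, mul_neg]
    linarith
  have hsum : ∑ j, ∑ i, w i * L i j = 0 := by
    rw [Finset.sum_comm]
    calc ∑ i, ∑ j, w i * L i j = ∑ i, w i * ∑ j, L i j := by
          simp [Finset.mul_sum]
      _ = 0 := by simp [hrow']
  have hzero : ∀ j, ∑ i, w i * L i j = 0 := by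
    intro j
    by_contra h
    have hlt : ∑ i, w i * L i j < 0 := lt_of_le_of_ne (hle j) h
    have : ∑ j, ∑ i, w i * L i j < ∑ _j : Fin n, (0:ℝ) :=
      Finset.sum_lt_sum (fun j _ => hle j) ⟨j, mem_univ j, hlt⟩
    simp [hsum] at this
  have key : ∀ i j, Relation.ReflTransGen (fun a b => a ≠ b ∧ L a b ≠ 0) i j →
      w j = 0 → w i = 0 := by
    intro i j h
    induction h with
    | refl => exact id
    | @tail b c hab hrel ih =>
      intro hc
      apply ih
      have h0 := hzero c
      rw [← Finset.add_sum_erase _ _ (mem_univ c), hc, zero_mul, zero_add] at h0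
      have hall := (Finset.sum_eq_zero_iff_of_nonpos (fun i hi =>
        mul_nonpos_of_nonneg_of_nonpos (abs_nonneg _)
          (hoff i c (Finset.ne_of_mem_erase hi)))).mp h0
      have hb := hall b (Finset.mem_erase.mpr ⟨hrel.1, mem_univ b⟩)
      rcases mul_eq_zero.mp hb with h | h
      · exact h
      · exact absurd h hrel.2
  have hkne : ∃ k, v k ≠ 0 := by
    by_contra h
    push_neg at h
    exact hv0 (funext fun i => h i)
  obtain ⟨k, hk⟩ := hkne
  have hpos : ∀ i, 0 < w i := by
    intro i
    have hne : w i ≠ 0 := fun h0 => hk (abs_eq_zero.mp (key k i (hconn k i) h0))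
    exact lt_of_le_of_ne (abs_nonneg _) (Ne.symm hne)
  refine ⟨w, hpos, ?_⟩
  rw [← Matrix.vecMul_vecMul]
  have h1 : Matrix.vecMul (fun _ => (1:ℝ)) (Matrix.diagonal w) = w := by
    ext j; simp [Matrix.vecMul_diagonal]
  rw [h1]
  funext j
  simpa [Matrix.vecMul, dotProduct] using hzero j
end

section
/- Let a weighted directed graph on n vertices with m edges have strictly positive weights w and be strongly connected, with Laplacian L = B₀ * Matrix.diagonal w * Bᵀ. Then 0 is a root of multiplicity exactly 1 of the characteristic polynomial of L (over ℂ), and every nonzero complex eigenvalue μ of L satisfies Re μ > 0. -/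
/-!
Off the diagonal, the Laplacian is minus the weight matrix of the graph, and its rows sum to
zero. Hence each Gershgorin disc is centred at `L i i ≥ 0` with radius `L i i`, so it lies in
`Re z > 0` apart from the point `0`. For the root `0`, the maximum principle along edges shows,
by strong connectivity, that `ker L` consists of the constant vectors. A constant vector `c` in
the range of `L` is `≥ 0` at a maximum and `≤ 0` at a minimum of its preimage, so
`ker L² = ker L`, and the algebraic multiplicity of `0` equals its geometric one, `1`.
-/

open Matrix Polynomial

namespace Module.End

variable {K V : Type*} [Field K] [AddCommGroup V] [Module K V]

theorem maxGenEigenspace_zero_eq_ker {f : End K V} (hf : ∀ x, f (f x) = 0 → f x = 0) :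
    f.maxGenEigenspace 0 = LinearMap.ker f := by
  have hpow : ∀ k x, (f ^ k) x = 0 → f x = 0 := by
    intro k
    induction k with
    | zero => intro x hx; simp_all
    | succ k ih => intro x hx; exact hf x (ih (f x) (by rwa [pow_succ] at hx))
  ext x
  simp only [mem_maxGenEigenspace, zero_smul, sub_zero, LinearMap.mem_ker]
  exact ⟨fun ⟨k, hk⟩ => hpow k x hk, fun hx => ⟨1, by rwa [pow_one]⟩⟩

theorem rootMultiplicity_zero_charpoly_eq_finrank_ker [FiniteDimensional K V] {f : End K V}
    (hf : ∀ x, f (f x) = 0 → f x = 0) :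
    f.charpoly.rootMultiplicity 0 = Module.finrank K (LinearMap.ker f) := by
  rw [rootMultiplicity_eq_natTrailingDegree', ← LinearMap.finrank_maxGenEigenspace_zero_eq,
    maxGenEigenspace_zero_eq_ker hf]

end Module.End

theorem Complex.re_pos_of_norm_sub_ofReal_le {μ : ℂ} {d : ℝ} (h : ‖μ - d‖ ≤ d)
    (hμ : μ ≠ 0) : 0 < μ.re := by
  have hd : 0 ≤ d := (norm_nonneg _).trans h
  have hsq : (μ.re - d) ^ 2 + μ.im ^ 2 ≤ d ^ 2 := by
    have := pow_le_pow_left₀ (norm_nonneg _) h 2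
    rwa [← normSq_eq_norm_sq, normSq_apply, sub_re, sub_im, ofReal_re, ofReal_im, sub_zero,
      ← sq, ← sq] at this
  have hpos : 0 < μ.re ^ 2 + μ.im ^ 2 := by
    have := normSq_pos.mpr hμ
    rwa [normSq_apply, ← sq, ← sq] at this
  nlinarith

namespace Matrix

variable {ι : Type*} [Fintype ι]

theorem re_mulVec_map_ofReal (L : Matrix ι ι ℝ) (x : ι → ℂ) (p : ι) :
    ((L.map Complex.ofReal *ᵥ x) p).re = (L *ᵥ fun j => (x j).re) p := by
  simp [mulVec, dotProduct, Complex.re_sum]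

theorem im_mulVec_map_ofReal (L : Matrix ι ι ℝ) (x : ι → ℂ) (p : ι) :
    ((L.map Complex.ofReal *ᵥ x) p).im = (L *ᵥ fun j => (x j).im) p := by
  simp [mulVec, dotProduct, Complex.im_sum]

structure IsLaplacian (L : Matrix ι ι ℝ) : Prop where
  sum_row_eq_zero : ∀ i, ∑ j, L i j = 0
  nonpos_of_ne : ∀ ⦃i j⦄, i ≠ j → L i j ≤ 0

namespace IsLaplacian

variable {L : Matrix ι ι ℝ}

theorem mulVec_apply_eq_sum (hL : L.IsLaplacian) (y : ι → ℝ) (p : ι) :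
    (L *ᵥ y) p = ∑ j, L p j * (y j - y p) := by
  simp only [mul_sub, Finset.sum_sub_distrib, ← Finset.sum_mul, hL.sum_row_eq_zero, zero_mul,
    sub_zero, mulVec, dotProduct]

theorem mul_sub_nonneg_of_forall_le (hL : L.IsLaplacian) {y : ι → ℝ} {p : ι}
    (hp : ∀ j, y j ≤ y p) (j : ι) : 0 ≤ L p j * (y j - y p) := by
  rcases eq_or_ne p j with rfl | hpj
  · simp
  · exact mul_nonneg_of_nonpos_of_nonpos (hL.nonpos_of_ne hpj) (sub_nonpos.mpr (hp j))

theorem mulVec_apply_nonneg_of_forall_le (hL : L.IsLaplacian) {y : ι → ℝ} {p : ι}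
    (hp : ∀ j, y j ≤ y p) : 0 ≤ (L *ᵥ y) p := by
  rw [hL.mulVec_apply_eq_sum]
  exact Finset.sum_nonneg fun j _ => hL.mul_sub_nonneg_of_forall_le hp j

theorem apply_eq_of_mulVec_apply_eq_zero (hL : L.IsLaplacian) {y : ι → ℝ} {p q : ι}
    (hy : (L *ᵥ y) p = 0) (hp : ∀ j, y j ≤ y p) (hpq : L p q < 0) : y q = y p := by
  rw [hL.mulVec_apply_eq_sum] at hy
  have hterm := (Finset.sum_eq_zero_iff_of_nonneg fun j _ =>
    hL.mul_sub_nonneg_of_forall_le hp j).mp hy q (Finset.mem_univ q)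
  exact sub_eq_zero.mp ((mul_eq_zero.mp hterm).resolve_left hpq.ne)

theorem apply_eq_of_mulVec_eq_zero (hL : L.IsLaplacian)
    (hconn : ∀ i j, Relation.ReflTransGen (fun a b => L a b < 0) i j)
    {y : ι → ℝ} (hy : L *ᵥ y = 0) (i j : ι) : y i = y j := by
  have : Nonempty ι := ⟨i⟩
  obtain ⟨p, hp⟩ := Finite.exists_max y
  suffices h : ∀ q, y q = y p by rw [h i, h j]
  intro q
  induction hconn p q with
  | refl => rfl
  | tail _ hab ih =>
    rw [← ih]
    exact hL.apply_eq_of_mulVec_apply_eq_zero (congrFun hy _) (fun j => ih ▸ hp j) hab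

theorem eq_zero_of_mulVec_eq_const [Nonempty ι] (hL : L.IsLaplacian) {y : ι → ℝ} {c : ℝ}
    (hy : L *ᵥ y = fun _ => c) : c = 0 := by
  obtain ⟨p, hp⟩ := Finite.exists_max y
  obtain ⟨q, hq⟩ := Finite.exists_min y
  have hc : 0 ≤ c := by simpa [hy] using hL.mulVec_apply_nonneg_of_forall_le hp
  have hnc : 0 ≤ -c := by
    have := hL.mulVec_apply_nonneg_of_forall_le (y := -y) (p := q) fun j => neg_le_neg (hq j)
    rwa [mulVec_neg, hy] at this
  linarith

theorem apply_eq_of_mulVec_map_ofReal_eq_zero (hL : L.IsLaplacian)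
    (hconn : ∀ i j, Relation.ReflTransGen (fun a b => L a b < 0) i j)
    {x : ι → ℂ} (hx : L.map Complex.ofReal *ᵥ x = 0) (i j : ι) : x i = x j := by
  refine Complex.ext (hL.apply_eq_of_mulVec_eq_zero hconn (y := fun j => (x j).re) ?_ i j)
    (hL.apply_eq_of_mulVec_eq_zero hconn (y := fun j => (x j).im) ?_ i j) <;>
  ext p
  · simp [← re_mulVec_map_ofReal, hx]
  · simp [← im_mulVec_map_ofReal, hx]

theorem eq_zero_of_mulVec_map_ofReal_eq_const [Nonempty ι] (hL : L.IsLaplacian) {x : ι → ℂ}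
    {c : ℂ} (hx : L.map Complex.ofReal *ᵥ x = fun _ => c) : c = 0 := by
  refine Complex.ext (hL.eq_zero_of_mulVec_eq_const (y := fun j => (x j).re) ?_)
    (hL.eq_zero_of_mulVec_eq_const (y := fun j => (x j).im) ?_) <;>
  ext p
  · simp [← re_mulVec_map_ofReal, hx]
  · simp [← im_mulVec_map_ofReal, hx]

theorem mulVec_map_ofReal_const (hL : L.IsLaplacian) (c : ℂ) :
    L.map Complex.ofReal *ᵥ (fun _ => c) = 0 := by
  ext p
  simp [mulVec, dotProduct, ← Finset.sum_mul, ← Complex.ofReal_sum, hL.sum_row_eq_zero]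

variable [DecidableEq ι]

theorem ker_toLin'_map_ofReal (hL : L.IsLaplacian)
    (hconn : ∀ i j, Relation.ReflTransGen (fun a b => L a b < 0) i j) :
    LinearMap.ker (toLin' (L.map Complex.ofReal)) = Submodule.span ℂ {fun _ => 1} := by
  refine le_antisymm (fun x hx => ?_) ?_
  · rcases isEmpty_or_nonempty ι with _ | ⟨⟨i⟩⟩
    · simp [Subsingleton.elim x 0]
    · have hconst := hL.apply_eq_of_mulVec_map_ofReal_eq_zero hconn hx
      refine Submodule.mem_span_singleton.mpr ⟨x i, funext fun j => ?_⟩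
      simp [hconst i j]
  · rw [Submodule.span_le, Set.singleton_subset_iff, SetLike.mem_coe, LinearMap.mem_ker,
      toLin'_apply]
    exact hL.mulVec_map_ofReal_const 1

theorem toLin'_map_ofReal_eq_zero_of_sq (hL : L.IsLaplacian)
    (hconn : ∀ i j, Relation.ReflTransGen (fun a b => L a b < 0) i j) (x : ι → ℂ)
    (hx : toLin' (L.map Complex.ofReal) (toLin' (L.map Complex.ofReal) x) = 0) :
    toLin' (L.map Complex.ofReal) x = 0 := by
  rcases isEmpty_or_nonempty ι with _ | hι
  · exact Subsingleton.elim _ _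
  let i : ι := Classical.arbitrary ι
  simp only [toLin'_apply] at hx ⊢
  have hconst : L.map Complex.ofReal *ᵥ x = fun _ => (L.map Complex.ofReal *ᵥ x) i :=
    funext fun j => hL.apply_eq_of_mulVec_map_ofReal_eq_zero hconn hx j i
  rw [hconst, hL.eq_zero_of_mulVec_map_ofReal_eq_const hconst, Pi.zero_def]

theorem rootMultiplicity_zero_charpoly_map_ofReal [Nonempty ι] (hL : L.IsLaplacian)
    (hconn : ∀ i j, Relation.ReflTransGen (fun a b => L a b < 0) i j) :
    (L.map Complex.ofReal).charpoly.rootMultiplicity 0 = 1 := by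
  rw [← Matrix.charpoly_toLin', Module.End.rootMultiplicity_zero_charpoly_eq_finrank_ker
    (hL.toLin'_map_ofReal_eq_zero_of_sq hconn), hL.ker_toLin'_map_ofReal hconn]
  exact finrank_span_singleton (Function.ne_iff.mpr ⟨Classical.arbitrary ι, one_ne_zero⟩)

theorem sum_erase_abs_eq (hL : L.IsLaplacian) (i : ι) :
    ∑ j ∈ Finset.univ.erase i, |L i j| = L i i := by
  have hrow := Finset.add_sum_erase _ (L i) (Finset.mem_univ i)
  rw [hL.sum_row_eq_zero] at hrow
  rw [Finset.sum_congr rfl fun j hj =>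
    abs_of_nonpos (hL.nonpos_of_ne (Finset.ne_of_mem_erase hj).symm), Finset.sum_neg_distrib]
  linarith

theorem re_pos_of_isRoot_charpoly_map_ofReal (hL : L.IsLaplacian) {μ : ℂ}
    (hμ : (L.map Complex.ofReal).charpoly.IsRoot μ) (hμ₀ : μ ≠ 0) : 0 < μ.re := by
  rw [← Matrix.charpoly_toLin', ← Module.End.hasEigenvalue_iff_isRoot_charpoly] at hμ
  obtain ⟨i, hi⟩ := eigenvalue_mem_ball hμ
  simp only [Metric.mem_closedBall, dist_eq_norm, map_apply, Complex.norm_real,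
    Real.norm_eq_abs, hL.sum_erase_abs_eq] at hi
  exact Complex.re_pos_of_norm_sub_ofReal_le hi hμ₀

end IsLaplacian

end Matrix

section Incidence

variable {ι κ : Type*} [Fintype κ] [DecidableEq κ] [DecidableEq ι] {s t : κ → ι}
  {w : κ → ℝ} {B B₀ : Matrix ι κ ℝ}

theorem incidence_mul_diagonal_mul_transpose_apply_of_ne
    (hB : ∀ i k, B i k = if i = s k then 1 else if i = t k then -1 else 0)
    (hB₀ : ∀ i k, B₀ i k = if i = s k then 1 else 0) {i j : ι} (hij : i ≠ j) :
    (B₀ * diagonal w * Bᵀ) i j = -∑ k with s k = i ∧ t k = j, w k := by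
  rw [mul_apply, Finset.sum_filter, ← Finset.sum_neg_distrib]
  refine Finset.sum_congr rfl fun k _ => ?_
  rw [mul_diagonal, transpose_apply, hB₀, hB]
  by_cases hi : i = s k
  · subst hi
    by_cases hj : j = t k
    · subst hj
      simp [hij.symm]
    · simp [hij.symm, hj, Ne.symm hj]
  · simp [hi, Ne.symm hi]

theorem sum_incidence_mul_diagonal_mul_transpose_apply [Fintype ι] (hst : ∀ k, s k ≠ t k)
    (hB : ∀ i k, B i k = if i = s k then 1 else if i = t k then -1 else 0) (i : ι) :
    ∑ j, (B₀ * diagonal w * Bᵀ) i j = 0 := by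
  have hcol : ∀ k, ∑ j, B j k = 0 := fun k => by
    simp only [hB]
    rw [Fintype.sum_eq_add (s k) (t k) (hst k) fun j hj => by simp [hj.1, hj.2]]
    simp [(hst k).symm]
  simp only [mul_apply, transpose_apply]
  rw [Finset.sum_comm]
  simp [← Finset.mul_sum, hcol]

theorem isLaplacian_incidence_mul_diagonal_mul_transpose [Fintype ι]
    (hst : ∀ k, s k ≠ t k) (hw : ∀ k, 0 ≤ w k)
    (hB : ∀ i k, B i k = if i = s k then 1 else if i = t k then -1 else 0)
    (hB₀ : ∀ i k, B₀ i k = if i = s k then 1 else 0) :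
    (B₀ * diagonal w * Bᵀ).IsLaplacian where
  sum_row_eq_zero := sum_incidence_mul_diagonal_mul_transpose_apply hst hB
  nonpos_of_ne _ _ hij := by
    rw [incidence_mul_diagonal_mul_transpose_apply_of_ne hB hB₀ hij, neg_nonpos]
    exact Finset.sum_nonneg fun k _ => hw k

theorem incidence_mul_diagonal_mul_transpose_apply_neg (hst : ∀ k, s k ≠ t k)
    (hw : ∀ k, 0 < w k)
    (hB : ∀ i k, B i k = if i = s k then 1 else if i = t k then -1 else 0)
    (hB₀ : ∀ i k, B₀ i k = if i = s k then 1 else 0) (k : κ) :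
    (B₀ * diagonal w * Bᵀ) (s k) (t k) < 0 := by
  rw [incidence_mul_diagonal_mul_transpose_apply_of_ne hB hB₀ (hst k), neg_neg_iff_pos]
  exact Finset.sum_pos (fun k _ => hw k) ⟨k, by simp⟩

end Incidence

/-- For a strongly connected weighted digraph with positive weights, the
Laplacian `L` has `0` as a root of multiplicity exactly one of its characteristic
polynomial over `ℂ`, and every nonzero complex eigenvalue has positive real part. -/
theorem laplacian_zero_simple_root_and_spectrum_in_open_right_half_plane
    (n m : ℕ) (hn : 0 < n) (s t : Fin m → Fin n) (hst : ∀ k, s k ≠ t k)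
    (w : Fin m → ℝ) (hw : ∀ k, 0 < w k)
    (hconn : ∀ i j : Fin n, Relation.ReflTransGen (fun a b => ∃ k, s k = a ∧ t k = b) i j)
    (B B₀ : Matrix (Fin n) (Fin m) ℝ)
    (hB : ∀ i k, B i k = if i = s k then 1 else if i = t k then -1 else 0)
    (hB₀ : ∀ i k, B₀ i k = if i = s k then 1 else 0)
    (L : Matrix (Fin n) (Fin n) ℝ)
    (hL : L = B₀ * Matrix.diagonal w * Bᵀ) :
    Polynomial.rootMultiplicity (0 : ℂ) ((L.map (Complex.ofReal)).charpoly) = 1 ∧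
    ∀ μ : ℂ, ((L.map (Complex.ofReal)).charpoly).IsRoot μ → μ ≠ 0 → 0 < μ.re := by
  have : Nonempty (Fin n) := ⟨⟨0, hn⟩⟩
  subst hL
  have hlap := isLaplacian_incidence_mul_diagonal_mul_transpose hst (fun k => (hw k).le) hB hB₀
  have hedge : ∀ a b, (∃ k, s k = a ∧ t k = b) → (B₀ * diagonal w * Bᵀ) a b < 0 :=
    fun _ _ ⟨k, hsk, htk⟩ =>
      hsk ▸ htk ▸ incidence_mul_diagonal_mul_transpose_apply_neg hst hw hB hB₀ k
  have hconn' := fun i j => Relation.ReflTransGen.mono hedge i j (hconn i j)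
  exact ⟨hlap.rootMultiplicity_zero_charpoly_map_ofReal hconn',
    fun _ => hlap.re_pos_of_isRoot_charpoly_map_ofReal⟩
end

section
/- Let M : Matrix (Fin (n+1)) (Fin (n+1)) ℝ be diagonal with strictly positive diagonal entries. Then: (i) Sᵀ * M⁻¹ * S is positive definite (in particular invertible); and (ii) with S⁺ = (Sᵀ * M⁻¹ * S)⁻¹ * Sᵀ * M⁻¹ and σ = 𝟙ᵀ M 𝟙, the (n+1)×(n+1) matrix U whose first column is σ⁻¹ • 𝟙 and whose remaining n columns are the columns of M⁻¹ * S is invertible, with inverse V given by stacking the row vector 𝟙ᵀ M on top of the n×(n+1) matrix S⁺ * M; that is, V * U = 1 and U * V = 1. -/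
open Matrix

/-! The columns of `S` sum to zero (`𝟙ᵀ S = 0`), and `S` is injective since its top block is
`-Iₙ`; the latter makes the Gram matrix `Sᵀ M⁻¹ S` positive definite. In `V * U` the off-diagonal
blocks vanish because `𝟙ᵀ M · M⁻¹ S = 𝟙ᵀ S = 0` and `Sᵀ 𝟙 = 0`, and the diagonal blocks are
`𝟙ᵀ M 𝟙 / σ = 1` and `(Sᵀ M⁻¹ S)⁻¹ Sᵀ M⁻¹ S = 1`; a one-sided inverse of a square matrix is
two-sided. -/

namespace Matrix

def negOneStackOnes (R : Type*) [Ring R] (n : ℕ) : Matrix (Fin (n + 1)) (Fin n) R :=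
  of fun i j => if (i : ℕ) = (j : ℕ) then -1 else if (i : ℕ) = n then 1 else 0

section negOneStackOnes

variable {R : Type*} [Ring R] {n : ℕ}

lemma negOneStackOnes_castSucc (i j : Fin n) :
    negOneStackOnes R n i.castSucc j = if i = j then -1 else 0 := by
  simp [negOneStackOnes, Fin.ext_iff, i.isLt.ne]

lemma negOneStackOnes_last (j : Fin n) : negOneStackOnes R n (Fin.last n) j = 1 := by
  simp [negOneStackOnes, j.isLt.ne']

lemma ones_vecMul_negOneStackOnes : (fun _ => 1) ᵥ* negOneStackOnes R n = 0 := by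
  ext j
  simp [vecMul, dotProduct, Fin.sum_univ_castSucc, negOneStackOnes_castSucc,
    negOneStackOnes_last]

lemma negOneStackOnes_mulVec_castSucc (x : Fin n → R) (j : Fin n) :
    (negOneStackOnes R n *ᵥ x) j.castSucc = -x j := by
  simp [mulVec, dotProduct, negOneStackOnes_castSucc]

lemma mulVec_injective_negOneStackOnes : Function.Injective (negOneStackOnes R n).mulVec :=
  fun x y h => funext fun j => by
    simpa [negOneStackOnes_mulVec_castSucc] using congrFun h j.castSucc

end negOneStackOnes

variable {K : Type*} [Field K] {ι m k : Type*} [Unique ι] [DecidableEq ι] [Fintype m]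
  [DecidableEq m] [Fintype k] [DecidableEq k]

theorem fromRows_mul_fromCols_eq_one_of_vecMul_eq_zero {M : Matrix m m K} (hM : IsUnit M)
    {S : Matrix m k K} (hG : IsUnit (Sᵀ * M⁻¹ * S)) {u : m → K} (hu : u ᵥ* S = 0)
    (hσ : u ⬝ᵥ (M *ᵥ u) ≠ 0) :
    fromRows (replicateRow ι (u ᵥ* M)) ((Sᵀ * M⁻¹ * S)⁻¹ * Sᵀ * M⁻¹ * M) *
      fromCols (replicateCol ι ((u ⬝ᵥ (M *ᵥ u))⁻¹ • u)) (M⁻¹ * S) = 1 := by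
  rw [isUnit_iff_isUnit_det] at hM hG
  rw [Matrix.mul_assoc _ M⁻¹, nonsing_inv_mul _ hM, Matrix.mul_one, fromRows_mul_fromCols,
    ← fromBlocks_one]
  congr 1
  · ext i j
    rw [Subsingleton.elim i j]
    simp [← dotProduct_mulVec, hσ]
  · rw [← replicateRow_vecMul, vecMul_vecMul, ← Matrix.mul_assoc, mul_nonsing_inv _ hM,
      Matrix.one_mul, hu, replicateRow_zero]
  · rw [Matrix.mul_assoc, ← replicateCol_mulVec, mulVec_smul, mulVec_transpose, hu, smul_zero,
      replicateCol_zero, Matrix.mul_zero]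
  · rw [Matrix.mul_assoc, ← Matrix.mul_assoc Sᵀ, nonsing_inv_mul _ hG]

end Matrix

/-- For `S = [-Iₙ; 𝟙ₙᵀ]` and a positive diagonal matrix `M`:
(i) `Sᵀ M⁻¹ S` is positive definite; (ii) the matrix `U = [σ⁻¹𝟙, M⁻¹S]` is invertible
with inverse `V = [𝟙ᵀM; S⁺M]`, where `S⁺ = (Sᵀ M⁻¹ S)⁻¹ Sᵀ M⁻¹` and `σ = 𝟙ᵀ M 𝟙`. -/
theorem S_grammian_posDef_and_U_V_inverse
    (n : ℕ) (d : Fin (n + 1) → ℝ) (hd : ∀ i, 0 < d i)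
    (M : Matrix (Fin (n + 1)) (Fin (n + 1)) ℝ) (hM : M = Matrix.diagonal d)
    (S : Matrix (Fin (n + 1)) (Fin n) ℝ)
    (hS : ∀ i j, S i j =
      if (i : ℕ) = (j : ℕ) then -1 else if (i : ℕ) = n then 1 else 0)
    (Sp : Matrix (Fin n) (Fin (n + 1)) ℝ)
    (hSp : Sp = (Sᵀ * M⁻¹ * S)⁻¹ * Sᵀ * M⁻¹)
    (σ : ℝ) (hσ : σ = dotProduct (fun _ => 1) (M.mulVec (fun _ => 1)))
    (U : Matrix (Fin (n + 1)) (Fin 1 ⊕ Fin n) ℝ)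
    (hU : U = Matrix.fromCols (Matrix.of fun _ _ => σ⁻¹) (M⁻¹ * S))
    (V : Matrix (Fin 1 ⊕ Fin n) (Fin (n + 1)) ℝ)
    (hV : V = Matrix.fromRows (Matrix.of fun _ j => Matrix.vecMul (fun _ => 1) M j) (Sp * M)) :
    (Sᵀ * M⁻¹ * S).PosDef ∧ V * U = 1 ∧ U * V = 1 := by
  have hS : S = negOneStackOnes ℝ n := ext hS
  have hMpos : M.PosDef := hM ▸ PosDef.diagonal hd
  have hG : (Sᵀ * M⁻¹ * S).PosDef := by
    simpa using hMpos.inv.conjTranspose_mul_mul_same (hS ▸ mulVec_injective_negOneStackOnes)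
  have hσpos : 0 < σ := by
    simp [hσ, hM, mulVec_diagonal, dotProduct, Finset.sum_pos, hd]
  have hVU : V * U = 1 := by
    have hcol : (of fun _ _ => σ⁻¹ : Matrix (Fin (n + 1)) (Fin 1) ℝ) =
        replicateCol (Fin 1) (σ⁻¹ • fun _ => 1) := by
      ext; simp
    rw [hV, hU, hSp, hcol, hσ]
    exact fromRows_mul_fromCols_eq_one_of_vecMul_eq_zero hMpos.isUnit hG.isUnit
      (hS ▸ ones_vecMul_negOneStackOnes) (hσ ▸ hσpos.ne')
  refine ⟨hG, hVU, ?_⟩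
  rw [hV, hU] at hVU ⊢
  exact (fromCols_mul_fromRows_eq_one_comm ((finCongr (add_comm n 1)).trans finSumFinEquiv.symm)
    _ _ _ _).mpr hVU
end

section
/- Let M : Matrix (Fin (n+1)) (Fin (n+1)) ℝ be diagonal with strictly positive diagonal entries, and let L_b : Matrix (Fin (n+1)) (Fin (n+1)) ℝ satisfy L_b.mulVec 𝟙 = 0 and Matrix.vecMul 𝟙 L_b = 0. With U the matrix whose first column is σ⁻¹ • 𝟙 and whose remaining columns are those of M⁻¹ * S, and V its inverse (first row 𝟙ᵀ M, remaining rows S⁺ * M), the similarity transformation block-diagonalizes the network matrix: V * (M⁻¹ * L_b) * U equals the block-diagonal matrix with (1,1) block the 1×1 zero matrix and (2,2) block S⁺ * L_b * M⁻¹ * S (and zero off-diagonal blocks). -/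
open Matrix

/-! `𝟙ᵀM` is a left null vector and `𝟙` a right null vector of `M⁻¹ L_b`, so the first row of
`V` and the first column of `U` annihilate it and only the `(2,2)` block survives, where
`S⁺ M · M⁻¹ L_b · M⁻¹ S = S⁺ L_b M⁻¹ S`. -/

section NullVectors

variable {α ι κ m n p q : Type*} [Fintype m] [Fintype n] [Semiring α]

theorem fromRows_replicateRow_mul_mul_fromCols_replicateCol
    (x : m → α) (B : Matrix p m α) (A : Matrix m n α) (w : n → α) (C : Matrix n q α)
    (hx : x ᵥ* A = 0) (hw : A *ᵥ w = 0) :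
    fromRows (replicateRow ι x) B * A * fromCols (replicateCol κ w) C =
      fromBlocks 0 0 0 (B * A * C) := by
  have hxA : replicateRow ι x * A = 0 := by
    rw [← replicateRow_vecMul, hx, replicateRow_zero]
  have hAw : B * A * replicateCol κ w = 0 := by
    rw [Matrix.mul_assoc, ← replicateCol_mulVec, hw, replicateCol_zero, Matrix.mul_zero]
  rw [fromRows_mul, fromRows_mul_fromCols, hxA, hAw, Matrix.zero_mul, Matrix.zero_mul]

end NullVectors

theorem vecMul_mul_vecMul_nonsing_inv_mul {α m n : Type*} [Fintype m] [DecidableEq m]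
    [CommRing α] (v : m → α) (M : Matrix m m α) (L : Matrix m n α) (hM : IsUnit M.det) :
    (v ᵥ* M) ᵥ* (M⁻¹ * L) = v ᵥ* L := by
  rw [vecMul_vecMul, mul_nonsing_inv_cancel_left M L hM]

theorem similarity_block_diagonalizes_network_matrix_general
    (n : ℕ) (d : Fin (n + 1) → ℝ) (hd : ∀ i, 0 < d i)
    (M : Matrix (Fin (n + 1)) (Fin (n + 1)) ℝ) (hM : M = Matrix.diagonal d)
    (Lb : Matrix (Fin (n + 1)) (Fin (n + 1)) ℝ)
    (hrow : Lb.mulVec (fun _ => 1) = 0)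
    (hcol : Matrix.vecMul (fun _ => 1) Lb = 0)
    (S : Matrix (Fin (n + 1)) (Fin n) ℝ)
    (Sp : Matrix (Fin n) (Fin (n + 1)) ℝ)
    (σ : ℝ)
    (U : Matrix (Fin (n + 1)) (Fin 1 ⊕ Fin n) ℝ)
    (hU : U = Matrix.fromCols (Matrix.of fun _ _ => σ⁻¹) (M⁻¹ * S))
    (V : Matrix (Fin 1 ⊕ Fin n) (Fin (n + 1)) ℝ)
    (hV : V = Matrix.fromRows (Matrix.of fun _ j => Matrix.vecMul (fun _ => 1) M j) (Sp * M)) :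
    V * (M⁻¹ * Lb) * U =
      Matrix.fromBlocks (0 : Matrix (Fin 1) (Fin 1) ℝ) 0 0 (Sp * Lb * M⁻¹ * S) := by
  have hMdet : IsUnit M.det := by
    rw [hM, det_diagonal]
    exact (Finset.prod_pos fun i _ => hd i).ne'.isUnit
  have hleft : ((fun _ => 1) ᵥ* M) ᵥ* (M⁻¹ * Lb) = 0 := by
    rw [vecMul_mul_vecMul_nonsing_inv_mul _ M Lb hMdet, hcol]
  have hright : (M⁻¹ * Lb) *ᵥ (fun _ => σ⁻¹) = 0 := by
    rw [← mulVec_mulVec, show (fun _ => σ⁻¹) = σ⁻¹ • (fun _ => (1 : ℝ)) by simp [funext_iff],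
      mulVec_smul, hrow, smul_zero, mulVec_zero]
  have hcancel : Sp * M * (M⁻¹ * Lb) * (M⁻¹ * S) = Sp * Lb * M⁻¹ * S := by
    rw [Matrix.mul_assoc Sp, mul_nonsing_inv_cancel_left M Lb hMdet, Matrix.mul_assoc (Sp * Lb)]
  rw [hV, hU, ← hcancel]
  exact fromRows_replicateRow_mul_mul_fromCols_replicateCol _ _ _ _ _ hleft hright

/-- For a balanced Laplacian `L_b` (zero row and column sums) and a positive
diagonal matrix `M`, the similarity transformation by `U = [σ⁻¹𝟙, M⁻¹S]` and its inverse
`V = [𝟙ᵀM; S⁺M]` block-diagonalizes `M⁻¹ L_b`: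
`V (M⁻¹ L_b) U = blockDiag(0, S⁺ L_b M⁻¹ S)`. -/
theorem similarity_block_diagonalizes_network_matrix
    (n : ℕ) (d : Fin (n + 1) → ℝ) (hd : ∀ i, 0 < d i)
    (M : Matrix (Fin (n + 1)) (Fin (n + 1)) ℝ) (hM : M = Matrix.diagonal d)
    (Lb : Matrix (Fin (n + 1)) (Fin (n + 1)) ℝ)
    (hrow : Lb.mulVec (fun _ => 1) = 0)
    (hcol : Matrix.vecMul (fun _ => 1) Lb = 0)
    (S : Matrix (Fin (n + 1)) (Fin n) ℝ)
    (hS : ∀ i j, S i j =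
      if (i : ℕ) = (j : ℕ) then -1 else if (i : ℕ) = n then 1 else 0)
    (Sp : Matrix (Fin n) (Fin (n + 1)) ℝ)
    (hSp : Sp = (Sᵀ * M⁻¹ * S)⁻¹ * Sᵀ * M⁻¹)
    (σ : ℝ) (hσ : σ = dotProduct (fun _ => 1) (M.mulVec (fun _ => 1)))
    (U : Matrix (Fin (n + 1)) (Fin 1 ⊕ Fin n) ℝ)
    (hU : U = Matrix.fromCols (Matrix.of fun _ _ => σ⁻¹) (M⁻¹ * S))
    (V : Matrix (Fin 1 ⊕ Fin n) (Fin (n + 1)) ℝ)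
    (hV : V = Matrix.fromRows (Matrix.of fun _ j => Matrix.vecMul (fun _ => 1) M j) (Sp * M)) :
    V * (M⁻¹ * Lb) * U =
      Matrix.fromBlocks (0 : Matrix (Fin 1) (Fin 1) ℝ) 0 0 (Sp * Lb * M⁻¹ * S) :=
  similarity_block_diagonalizes_network_matrix_general n d hd M hM Lb hrow hcol S Sp σ U hU V hV
end

section
/- Let a weighted directed graph on n+1 vertices with m edges have strictly positive weights w, be strongly connected, and be balanced (B.mulVec w = 0), with Laplacian L_b = B₀ * Matrix.diagonal w * Bᵀ. Let M : Matrix (Fin (n+1)) (Fin (n+1)) ℝ be diagonal with strictly positive diagonal entries. Then every complex eigenvalue μ of the n×n matrix S⁺ * L_b * M⁻¹ * S satisfies Re μ > 0; equivalently, -S⁺ * L_b * M⁻¹ * S is Hurwitz. -/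
open Matrix Polynomial

private lemma rlb_eval_charpoly {N : ℕ} (A : Matrix (Fin N) (Fin N) ℂ) (μ : ℂ) :
    A.charpoly.eval μ = (Matrix.diagonal (fun _ => μ) - A).det := by
  rw [Matrix.charpoly, ← Polynomial.coe_evalRingHom, RingHom.map_det]
  congr 1
  ext i j
  by_cases h : i = j <;>
    simp [charmatrix_apply, Matrix.diagonal_apply, h, Matrix.one_apply]

private lemma rlb_S_mulVec_castSucc {R : Type*} [CommRing R] {n : ℕ}
    (S : Matrix (Fin (n+1)) (Fin n) R)
    (hS : ∀ i j, S i j = if (i : ℕ) = (j : ℕ) then -1 else if (i : ℕ) = n then 1 else 0)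
    (v : Fin n → R) (j : Fin n) : S.mulVec v (Fin.castSucc j) = -v j := by
  unfold Matrix.mulVec dotProduct
  have : ∀ j' : Fin n, S (Fin.castSucc j) j' * v j' = if j' = j then -v j else 0 := by
    intro j'
    rw [hS]
    rcases eq_or_ne j' j with h | h
    · simp [h]
    · have h1 : (j : ℕ) ≠ (j' : ℕ) := fun hc => h (Fin.ext hc.symm)
      simp [Fin.coe_castSucc, h1, Nat.ne_of_lt j.isLt, h]
  simp only [this]
  simp

private lemma rlb_S_colsum {R : Type*} [CommRing R] {n : ℕ}
    (S : Matrix (Fin (n+1)) (Fin n) R)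
    (hS : ∀ i j, S i j = if (i : ℕ) = (j : ℕ) then -1 else if (i : ℕ) = n then 1 else 0)
    (j : Fin n) : ∑ i, S i j = 0 := by
  rw [Fin.sum_univ_castSucc]
  have hlast : S (Fin.last n) j = 1 := by
    rw [hS]; simp [Fin.val_last, (Nat.ne_of_lt j.isLt).symm]
  have hcs : ∀ i : Fin n, S (Fin.castSucc i) j = if i = j then -1 else 0 := by
    intro i
    rw [hS]
    rcases eq_or_ne i j with h | h
    · simp [h]
    · have h1 : (i : ℕ) ≠ (j : ℕ) := fun hc => h (Fin.ext hc)
      simp [Fin.coe_castSucc, h1, Nat.ne_of_lt i.isLt, h]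
  simp only [hcs, hlast]
  simp

private lemma rlb_factor_S {R : Type*} [CommRing R] {n : ℕ}
    (S : Matrix (Fin (n+1)) (Fin n) R)
    (hS : ∀ i j, S i j = if (i : ℕ) = (j : ℕ) then -1 else if (i : ℕ) = n then 1 else 0)
    (Y : Matrix (Fin (n+1)) (Fin n) R) (hY : ∀ j, ∑ i, Y i j = 0) :
    Y = S * Matrix.of (fun j k => -Y (Fin.castSucc j) k) := by
  ext i k
  rw [Matrix.mul_apply]
  refine Fin.lastCases ?_ ?_ i
  · have h1 : ∀ j : Fin n, S (Fin.last n) j * Matrix.of (fun j k => -Y (Fin.castSucc j) k) j k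
        = -Y (Fin.castSucc j) k := by
      intro j
      have : S (Fin.last n) j = 1 := by
        rw [hS]; simp [Fin.val_last, (Nat.ne_of_lt j.isLt).symm]
      simp [this]
    rw [Finset.sum_congr rfl (fun j _ => h1 j)]
    have := hY k
    rw [Fin.sum_univ_castSucc] at this
    rw [Finset.sum_neg_distrib]
    linear_combination this
  · intro i'
    have h1 : ∀ j : Fin n, S (Fin.castSucc i') j * Matrix.of (fun j k => -Y (Fin.castSucc j) k) j k
        = if j = i' then Y (Fin.castSucc i') k else 0 := by
      intro j
      rcases eq_or_ne j i' with h | h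
      · subst h; rw [hS]; simp
      · rw [hS]
        have h1 : (i' : ℕ) ≠ (j : ℕ) := fun hc => h (Fin.ext hc.symm)
        simp [Fin.coe_castSucc, h1, Nat.ne_of_lt i'.isLt, h]
    rw [Finset.sum_congr rfl (fun j _ => h1 j)]
    simp

private lemma rlb_lap_sym {n m : ℕ} (s t : Fin m → Fin (n + 1)) (hst : ∀ k, s k ≠ t k)
    (w : Fin m → ℝ)
    (B B₀ : Matrix (Fin (n + 1)) (Fin m) ℝ)
    (hB : ∀ i k, B i k = if i = s k then 1 else if i = t k then -1 else 0)
    (hB₀ : ∀ i k, B₀ i k = if i = s k then 1 else 0)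
    (hbal : B.mulVec w = 0) :
    B₀ * Matrix.diagonal w * Bᵀ + (B₀ * Matrix.diagonal w * Bᵀ)ᵀ
      = B * Matrix.diagonal w * Bᵀ := by
  have hent : ∀ (A : Matrix (Fin (n+1)) (Fin m) ℝ) i j,
      (A * Matrix.diagonal w * Bᵀ) i j = ∑ k, A i k * w k * B j k := by
    intro A i j
    rw [Matrix.mul_apply]
    congr 1; ext k
    rw [Matrix.mul_diagonal]
    rfl
  ext i j
  rw [Matrix.add_apply, Matrix.transpose_apply, hent, hent, hent]
  rw [← sub_eq_zero, ← Finset.sum_add_distrib, ← Finset.sum_sub_distrib]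
  have hb : ∀ i, ∑ k, B i k * w k = 0 := by
    intro i
    have := congrFun hbal i
    simpa [Matrix.mulVec, dotProduct] using this
  have key : ∀ k, B₀ i k * w k * B j k + B₀ j k * w k * B i k - B i k * w k * B j k
      = (if i = j then (1:ℝ) else 0) * (B i k * w k) := by
    intro k
    rw [hB, hB, hB₀, hB₀]
    rcases eq_or_ne i (s k) with h1 | h1 <;> rcases eq_or_ne i (t k) with h2 | h2 <;>
      rcases eq_or_ne j (s k) with h3 | h3 <;> rcases eq_or_ne j (t k) with h4 | h4 <;>
      first
        | (exact absurd (h1.symm.trans h2) (hst k))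
        | (exact absurd (h3.symm.trans h4) (hst k))
        | (simp only [h1, h2, h3, h4, hst k, if_pos, if_neg, if_true, if_false, eq_comm]; ring)
        | (simp only [h1, h2, h3, h4, hst k, if_pos, if_neg, if_true, if_false, eq_comm] <;>
            split_ifs <;> simp_all <;> ring)
  rw [Finset.sum_congr rfl (fun k _ => key k), ← Finset.mul_sum, hb i, mul_zero]

private lemma rlb_map_mul {l p q : Type*} [Fintype p]
    (A : Matrix l p ℝ) (B : Matrix p q ℝ) :
    (A * B).map Complex.ofReal = A.map Complex.ofReal * B.map Complex.ofReal := by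
  ext i j
  simp [Matrix.mul_apply, Matrix.map_apply]

/-- For a strongly connected, balanced weighted digraph on `n+1` vertices with
positive weights and Laplacian `L_b`, and positive diagonal `M`, every complex eigenvalue of
the reduced matrix `S⁺ L_b M⁻¹ S` has positive real part; equivalently,
`-S⁺ L_b M⁻¹ S` is Hurwitz. -/
theorem reduced_laplacian_block_is_antiHurwitz
    (n m : ℕ) (s t : Fin m → Fin (n + 1)) (hst : ∀ k, s k ≠ t k)
    (w : Fin m → ℝ) (hw : ∀ k, 0 < w k)
    (hconn : ∀ i j : Fin (n + 1),
      Relation.ReflTransGen (fun a b => ∃ k, s k = a ∧ t k = b) i j)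
    (B B₀ : Matrix (Fin (n + 1)) (Fin m) ℝ)
    (hB : ∀ i k, B i k = if i = s k then 1 else if i = t k then -1 else 0)
    (hB₀ : ∀ i k, B₀ i k = if i = s k then 1 else 0)
    (hbal : B.mulVec w = 0)
    (Lb : Matrix (Fin (n + 1)) (Fin (n + 1)) ℝ)
    (hLb : Lb = B₀ * Matrix.diagonal w * Bᵀ)
    (d : Fin (n + 1) → ℝ) (hd : ∀ i, 0 < d i)
    (M : Matrix (Fin (n + 1)) (Fin (n + 1)) ℝ) (hM : M = Matrix.diagonal d)
    (S : Matrix (Fin (n + 1)) (Fin n) ℝ)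
    (hS : ∀ i j, S i j =
      if (i : ℕ) = (j : ℕ) then -1 else if (i : ℕ) = n then 1 else 0)
    (Sp : Matrix (Fin n) (Fin (n + 1)) ℝ)
    (hSp : Sp = (Sᵀ * M⁻¹ * S)⁻¹ * Sᵀ * M⁻¹) :
    (∀ μ : ℂ, (((Sp * Lb * M⁻¹ * S).map (Complex.ofReal)).charpoly).IsRoot μ → 0 < μ.re) ∧
    (∀ μ : ℂ, (((-(Sp * Lb * M⁻¹ * S)).map (Complex.ofReal)).charpoly).IsRoot μ → μ.re < 0) := by
  have hd0 : ∀ i, d i ≠ 0 := fun i => (hd i).ne'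
  -- the inverse of M
  set Minv : Matrix (Fin (n+1)) (Fin (n+1)) ℝ := Matrix.diagonal (fun i => (d i)⁻¹) with hMinvdef
  have hMinv : M⁻¹ = Minv := by
    apply Matrix.inv_eq_right_inv
    rw [hM, hMinvdef, Matrix.diagonal_mul_diagonal]
    rw [show (fun i => d i * (d i)⁻¹) = fun _ => (1:ℝ) from funext fun i => mul_inv_cancel₀ (hd0 i)]
    exact Matrix.diagonal_one
  rw [hMinv] at hSp ⊢
  -- invertibility of N = Sᵀ Minv S
  set N : Matrix (Fin n) (Fin n) ℝ := Sᵀ * Minv * S with hNdef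
  have hSinj : ∀ (v : Fin n → ℝ), S.mulVec v = 0 → v = 0 := by
    intro v hv
    funext j
    have := congrFun hv (Fin.castSucc j)
    rw [rlb_S_mulVec_castSucc S hS] at this
    simpa using congrArg Neg.neg this
  have hNdet : N.det ≠ 0 := by
    intro hdet
    obtain ⟨v, hv0, hv⟩ := (Matrix.exists_mulVec_eq_zero_iff).2 hdet
    apply hv0
    apply hSinj
    -- quadratic form
    have hq : v ⬝ᵥ N.mulVec v = ∑ i, (d i)⁻¹ * (S.mulVec v i)^2 := by
      rw [hNdef, ← Matrix.mulVec_mulVec, ← Matrix.mulVec_mulVec,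
        Matrix.dotProduct_mulVec, Matrix.vecMul_transpose]
      unfold dotProduct
      congr 1; ext i
      rw [Matrix.mulVec_diagonal]
      ring
    rw [hv] at hq
    simp only [dotProduct_zero] at hq
    have hterm : ∀ i ∈ Finset.univ, (0:ℝ) ≤ (d i)⁻¹ * (S.mulVec v i)^2 := by
      intro i _
      have := hd i
      positivity
    have := (Finset.sum_eq_zero_iff_of_nonneg hterm).1 hq.symm
    funext i
    have hi := this i (Finset.mem_univ i)
    have : (S.mulVec v i)^2 = 0 := by
      rcases mul_eq_zero.1 hi with h | h
      · exact absurd h (inv_ne_zero (hd0 i))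
      · exact h
    simpa using pow_eq_zero_iff (n := 2) (by norm_num) |>.1 this
  have hSpS : Sp * S = 1 := by
    rw [hSp, Matrix.mul_assoc, Matrix.mul_assoc, ← Matrix.mul_assoc Sᵀ, ← hNdef]
    exact Matrix.nonsing_inv_mul N (isUnit_iff_ne_zero.2 hNdet)
  -- column sums of Lb vanish
  have hLbcol : ∀ j, ∑ i, Lb i j = 0 := by
    intro j
    rw [hLb]
    have : ∀ i, (B₀ * Matrix.diagonal w * Bᵀ) i j = ∑ k, B₀ i k * (w k * B j k) := by
      intro i
      rw [Matrix.mul_apply]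
      congr 1; ext k
      rw [Matrix.mul_diagonal, Matrix.transpose_apply]
      ring
    rw [Finset.sum_congr rfl (fun i _ => this i), Finset.sum_comm]
    have hcol : ∀ k, ∑ i, B₀ i k * (w k * B j k) = B j k * w k := by
      intro k
      rw [← Finset.sum_mul]
      have : ∑ i, B₀ i k = 1 := by
        rw [Finset.sum_congr rfl (fun i _ => hB₀ i k)]
        simp
      rw [this]; ring
    rw [Finset.sum_congr rfl (fun k _ => hcol k)]
    have := congrFun hbal j
    simpa [Matrix.mulVec, dotProduct] using this
  -- column sums of Lb * Minv * S vanish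
  have hYcol : ∀ k, ∑ i, (Lb * Minv * S) i k = 0 := by
    intro k
    have h1 : ∀ i, (Lb * Minv * S) i k = ∑ j, Lb i j * (Minv * S) j k := by
      intro i
      rw [Matrix.mul_assoc, Matrix.mul_apply]
    rw [Finset.sum_congr rfl (fun i _ => h1 i), Finset.sum_comm]
    apply Finset.sum_eq_zero
    intro j _
    rw [← Finset.sum_mul, hLbcol j, zero_mul]
  -- the key intertwining identity
  have hKey : S * (Sp * Lb * Minv * S) = Lb * Minv * S := by
    have hfac := rlb_factor_S S hS (Lb * Minv * S) hYcol
    set C := Matrix.of (fun j k => -(Lb * Minv * S) (Fin.castSucc j) k) with hCdef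
    have h2 : Sp * Lb * Minv * S = C := by
      rw [Matrix.mul_assoc, Matrix.mul_assoc, ← Matrix.mul_assoc Lb, hfac,
        ← Matrix.mul_assoc, hSpS, Matrix.one_mul]
    rw [h2, ← hfac]
  -- pass to ℂ
  set A : Matrix (Fin n) (Fin n) ℝ := Sp * Lb * Minv * S with hAdef
  set A' := A.map Complex.ofReal with hA'def
  set S' := S.map Complex.ofReal with hS'def
  set Lb' := Lb.map Complex.ofReal with hLb'def
  set Minv' := Minv.map Complex.ofReal with hMinv'def
  have hS' : ∀ i j, S' i j = if (i : ℕ) = (j : ℕ) then -1 else if (i : ℕ) = n then 1 else 0 := by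
    intro i j
    rw [hS'def, Matrix.map_apply, hS]
    split_ifs <;> simp
  have hKey' : S' * A' = Lb' * Minv' * S' := by
    rw [hS'def, hA'def, hLb'def, hMinv'def, ← rlb_map_mul, ← rlb_map_mul, ← rlb_map_mul, hKey]
  -- main eigenvalue argument
  have main : ∀ μ : ℂ, (A'.charpoly).IsRoot μ → 0 < μ.re := by
    intro μ hμ
    have hdet : (Matrix.diagonal (fun _ => μ) - A').det = 0 := by
      rw [← rlb_eval_charpoly]; exact hμ
    obtain ⟨v, hv0, hv⟩ := (Matrix.exists_mulVec_eq_zero_iff).2 hdet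
    have heig : A'.mulVec v = μ • v := by
      rw [Matrix.sub_mulVec] at hv
      have h1 : (Matrix.diagonal (fun _ => μ)).mulVec v = μ • v := by
        funext i; rw [Matrix.mulVec_diagonal]; rfl
      rw [h1] at hv
      funext i
      have := congrFun hv i
      simp only [Pi.sub_apply, Pi.zero_apply, sub_eq_zero] at this
      exact this.symm
    set u : Fin (n+1) → ℂ := S'.mulVec v with hudef
    have hu0 : u ≠ 0 := by
      intro h
      apply hv0
      funext j
      have := congrFun h (Fin.castSucc j)
      rw [hudef] at this
      rw [rlb_S_mulVec_castSucc S' hS'] at this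
      simpa using congrArg Neg.neg this
    set x : Fin (n+1) → ℂ := fun i => ((d i : ℂ))⁻¹ * u i with hxdef
    have hdC0 : ∀ i, (d i : ℂ) ≠ 0 := fun i => Complex.ofReal_ne_zero.2 (hd0 i)
    have hux : ∀ i, u i = (d i : ℂ) * x i := by
      intro i
      rw [hxdef, mul_inv_cancel_left₀ (hdC0 i)]
    -- eigen equation for Lb'
    have hLx : Lb'.mulVec x = μ • u := by
      have hMinv'eq : Minv' = Matrix.diagonal (fun i => ((d i : ℂ))⁻¹) := by
        rw [hMinv'def, hMinvdef]
        ext a b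
        by_cases h : a = b <;> simp [Matrix.diagonal_apply, h]
      have hxMinv : Minv'.mulVec u = x := by
        funext i
        rw [hMinv'eq, Matrix.mulVec_diagonal, hxdef]
      calc Lb'.mulVec x = Lb'.mulVec (Minv'.mulVec u) := by rw [hxMinv]
        _ = (Lb' * Minv').mulVec u := (Matrix.mulVec_mulVec _ _ _)
        _ = (Lb' * Minv').mulVec (S'.mulVec v) := by rw [hudef]
        _ = ((Lb' * Minv') * S').mulVec v := (Matrix.mulVec_mulVec _ _ _)
        _ = (S' * A').mulVec v := by rw [hKey']
        _ = S'.mulVec (A'.mulVec v) := (Matrix.mulVec_mulVec _ _ _).symm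
        _ = S'.mulVec (μ • v) := by rw [heig]
        _ = μ • u := by rw [Matrix.mulVec_smul, hudef]
    -- the quadratic form
    set p : ℝ := ∑ i, d i * Complex.normSq (x i) with hpdef
    have hp_pos : 0 < p := by
      have hxne : ∃ i, x i ≠ 0 := by
        by_contra h
        push_neg at h
        apply hu0
        funext i
        rw [hux i, h i, mul_zero]; rfl
      obtain ⟨i0, hi0⟩ := hxne
      apply Finset.sum_pos' (fun i _ => mul_nonneg (hd i).le (Complex.normSq_nonneg _))
      exact ⟨i0, Finset.mem_univ i0, by
        have : 0 < Complex.normSq (x i0) := by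
          rwa [Complex.normSq_pos]
        exact mul_pos (hd i0) this⟩
    set q : ℂ := star x ⬝ᵥ Lb'.mulVec x with hqdef
    have hq1 : q = μ * (p : ℂ) := by
      rw [hqdef, hLx, dotProduct_smul]
      have : star x ⬝ᵥ u = (p : ℂ) := by
        unfold dotProduct
        rw [hpdef, Complex.ofReal_sum]
        apply Finset.sum_congr rfl
        intro i _
        rw [Pi.star_apply, hux i, Complex.ofReal_mul, Complex.normSq_eq_conj_mul_self]
        simp only [Complex.star_def]
        ring
      rw [this]
      rfl
    -- q + conj q
    have hLbH : Lb'ᴴ = Lb'ᵀ := by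
      ext i j
      simp [Matrix.conjTranspose_apply, hLb'def, Matrix.map_apply, Complex.conj_ofReal]
    have hconjq : (starRingEnd ℂ) q = star x ⬝ᵥ Lb'ᵀ.mulVec x := by
      calc (starRingEnd ℂ) q = star ((star x) ⬝ᵥ (Lb'.mulVec x)) := by rw [hqdef]; rfl
        _ = star (Lb'.mulVec x) ⬝ᵥ star (star x) := by rw [Matrix.star_dotProduct_star]
        _ = (star x ᵥ* Lb'ᴴ) ⬝ᵥ x := by rw [Matrix.star_mulVec, star_star]
        _ = star x ⬝ᵥ (Lb'ᵀ.mulVec x) := by rw [hLbH, ← Matrix.dotProduct_mulVec]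
    -- the transformed incidence data
    set B' := B.map Complex.ofReal with hB'def
    set y : Fin m → ℂ := B'ᵀ.mulVec x with hydef
    have hW' : (Matrix.diagonal w).map Complex.ofReal
        = Matrix.diagonal (fun k => (w k : ℂ)) := by
      ext a b
      by_cases h : a = b <;> simp [Matrix.diagonal_apply, h]
    have hsym' : Lb' + Lb'ᵀ = B' * Matrix.diagonal (fun k => (w k : ℂ)) * B'ᵀ := by
      have h0 : Lb + Lbᵀ = B * Matrix.diagonal w * Bᵀ := by
        rw [hLb]
        exact rlb_lap_sym s t hst w B B₀ hB hB₀ hbal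
      have h1 : (Lb + Lbᵀ).map Complex.ofReal = Lb' + Lb'ᵀ := by
        ext i j
        simp [Matrix.map_apply, hLb'def]
      rw [← h1, h0, rlb_map_mul, rlb_map_mul, hW', hB'def, Matrix.transpose_map]
    have hstarY : star x ᵥ* B' = star y := by
      have h1 : star y = star x ᵥ* (B'ᵀ)ᴴ := by
        rw [hydef, Matrix.star_mulVec]
      have h2 : (B'ᵀ)ᴴ = B' := by
        ext i j
        simp [Matrix.conjTranspose_apply, hB'def, Matrix.map_apply, Complex.conj_ofReal]
      rw [h1, h2]
    have hq2 : q + (starRingEnd ℂ) q = ((∑ k, w k * Complex.normSq (y k) : ℝ) : ℂ) := by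
      rw [hconjq, hqdef, ← dotProduct_add, ← Matrix.add_mulVec, hsym',
        ← Matrix.mulVec_mulVec, ← Matrix.mulVec_mulVec, ← hydef,
        Matrix.dotProduct_mulVec, hstarY]
      unfold dotProduct
      rw [Complex.ofReal_sum]
      apply Finset.sum_congr rfl
      intro k _
      rw [Matrix.mulVec_diagonal, Pi.star_apply, Complex.ofReal_mul,
        Complex.normSq_eq_conj_mul_self]
      simp only [Complex.star_def]
      ring
    -- take real parts
    have hre : 2 * (μ.re * p) = ∑ k, w k * Complex.normSq (y k) := by
      rw [hq1] at hq2
      have := congrArg Complex.re hq2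
      simp only [Complex.add_re, Complex.conj_re, Complex.mul_re, Complex.ofReal_re,
        Complex.ofReal_im, mul_zero, sub_zero] at this
      linarith
    -- conclude positivity
    by_contra hle
    push_neg at hle
    have hE0 : ∑ k, w k * Complex.normSq (y k) = 0 := by
      have h1 : ∑ k, w k * Complex.normSq (y k) ≤ 0 := by
        rw [← hre]
        nlinarith [hp_pos]
      have h2 : 0 ≤ ∑ k, w k * Complex.normSq (y k) :=
        Finset.sum_nonneg fun k _ => mul_nonneg (hw k).le (Complex.normSq_nonneg _)
      linarith
    have hyzero : ∀ k, y k = 0 := by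
      intro k
      have := (Finset.sum_eq_zero_iff_of_nonneg
        (fun k _ => mul_nonneg (hw k).le (Complex.normSq_nonneg _))).1 hE0 k (Finset.mem_univ k)
      rcases mul_eq_zero.1 this with h | h
      · exact absurd h (hw k).ne'
      · exact Complex.normSq_eq_zero.1 h
    have hyk : ∀ k, y k = x (s k) - x (t k) := by
      intro k
      rw [hydef]
      unfold Matrix.mulVec dotProduct
      have hterm : ∀ i, B'ᵀ k i * x i
          = (if i = s k then x i else 0) - (if i = t k then x i else 0) := by
        intro i
        rw [Matrix.transpose_apply, hB'def, Matrix.map_apply, hB]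
        rcases eq_or_ne i (s k) with h1 | h1 <;> rcases eq_or_ne i (t k) with h2 | h2
        · exact absurd (h1.symm.trans h2) (hst k)
        · simp [h1, h2, hst k, Ne.symm (hst k)]
        · simp [h1, h2, hst k, Ne.symm (hst k)]
        · simp [h1, h2, hst k, Ne.symm (hst k)]
      rw [Finset.sum_congr rfl (fun i _ => hterm i), Finset.sum_sub_distrib,
        Finset.sum_ite_eq' Finset.univ (s k) x, Finset.sum_ite_eq' Finset.univ (t k) x]
      simp
    have hedge : ∀ k, x (s k) = x (t k) := by
      intro k
      have := hyk k
      rw [hyzero k] at this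
      linear_combination -this
    have hxconst : ∀ i j : Fin (n+1), x i = x j := by
      intro i j
      induction hconn i j with
      | refl => rfl
      | tail _ hbc ih =>
        obtain ⟨k, hk1, hk2⟩ := hbc
        rw [ih, ← hk1, ← hk2, hedge k]
    have hsumu : ∑ i, u i = 0 := by
      rw [hudef]
      unfold Matrix.mulVec dotProduct
      rw [Finset.sum_comm]
      apply Finset.sum_eq_zero
      intro j _
      rw [← Finset.sum_mul, rlb_S_colsum S' hS' j, zero_mul]
    have hx0 : x 0 = 0 := by
      have h1 : ∑ i, u i = (∑ i, (d i : ℂ)) * x 0 := by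
        rw [Finset.sum_mul]
        apply Finset.sum_congr rfl
        intro i _
        rw [hux i, hxconst i 0]
      rw [hsumu] at h1
      have h2 : (∑ i, (d i : ℂ)) ≠ 0 := by
        rw [← Complex.ofReal_sum]
        exact Complex.ofReal_ne_zero.2
          (Finset.sum_pos (fun i _ => hd i) Finset.univ_nonempty).ne'
      exact (mul_eq_zero.1 h1.symm).resolve_left h2
    have : p = 0 := by
      rw [hpdef]
      apply Finset.sum_eq_zero
      intro i _
      rw [hxconst i 0, hx0]
      simp
    linarith [hp_pos]
  constructor
  · exact main
  · intro μ hμ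
    have hmap : (-A).map Complex.ofReal = -A' := by
      ext i j
      simp [Matrix.map_apply, hA'def]
    rw [hmap] at hμ
    have h2 : A'.charpoly.IsRoot (-μ) := by
      have hdet0 : (Matrix.diagonal (fun _ : Fin n => μ) - (-A')).det = 0 := by
        rw [← rlb_eval_charpoly]
        exact hμ
      show A'.charpoly.eval (-μ) = 0
      rw [rlb_eval_charpoly]
      have heq : Matrix.diagonal (fun _ : Fin n => -μ) - A'
          = -(Matrix.diagonal (fun _ : Fin n => μ) - (-A')) := by
        ext i j
        by_cases h : i = j <;> simp [Matrix.diagonal_apply, h] <;> ring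
      rw [heq, Matrix.det_neg, hdet0, mul_zero]
    have := main (-μ) h2
    rw [Complex.neg_re] at this
    linarith
end

section
/- Consider an original network on n vertices: a strongly connected weighted directed graph with strictly positive weights w satisfying B.mulVec w = 0, balanced Laplacian L_b = B₀ * Matrix.diagonal w * Bᵀ, a diagonal matrix M with strictly positive diagonal entries, system matrix L = M⁻¹ * L_b, input matrix F : Matrix (Fin n) (Fin p) ℝ, and output matrix H : Matrix (Fin q) (Fin n) ℝ. Let π : Fin n → Fin r be surjective with characteristic matrix Π given by Π i c = 1 if π i = c and 0 otherwise, and set M̂ = Πᵀ * M * Π, F̂ = M̂⁻¹ * Πᵀ * (M * F), Ĥ = H * Π. Consider a reduced network: a strongly connected weighted directed graph on r vertices with strictly positive weights ŵ satisfying B̂.mulVec ŵ = 0, reduced balanced Laplacian L̂_b = B̂₀ * Matrix.diagonal ŵ * B̂ᵀ, and L̂ = M̂⁻¹ * L̂_b. Then the impulse-response error is square-integrable: the function t ↦ ‖H * Matrix.exp ℝ (-t • L) * F - Ĥ * Matrix.exp ℝ (-t • L̂) * F̂‖² is integrable on the interval [0, ∞). (This expresses that the error system belongs to H₂ for every admissible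 choice of reduced weights.) -/
/-!
With `M = diagonal d`, the balanced Laplacian `L_b = B₀ W Bᵀ` has zero row and column sums, so
`L = M⁻¹ L_b` kills `1` on the right and `dᵀ` on the left, and `exp (-t L)` fixes the projection
`J = 1 dᵀ / ∑ d`. Along `y = (exp (-t L) - J) x` the weighted energy `∑ dᵢ yᵢ²` has derivative
`-2 yᵀ L_b y = -∑ₖ wₖ (y (s k) - y (t k))²`. By strong connectivity this Dirichlet energy is
positive definite on the invariant hyperplane `dᵀ y = 0`, hence (compactness of the sphere)
dominates a multiple of the weighted energy, and Grönwall gives exponential decay of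
`‖exp (-t L) - J‖²`. The same holds for the reduced network with masses `Πᵀ d`, and `F̂, Ĥ` are
built so that `H J F = Ĥ Ĵ F̂`. So the error is `H (exp (-t L) - J) F - Ĥ (exp (-t L̂) - Ĵ) F̂`,
whose squared norm is dominated by integrable exponentials.
-/

open Matrix NormedSpace

attribute [local instance] Matrix.frobeniusNormedAddCommGroup

section ExpSmul

variable {𝔸 : Type*} [NormedRing 𝔸] [NormedAlgebra ℝ 𝔸] [CompleteSpace 𝔸]

theorem mul_exp_eq_self_of_mul_eq_zero {A J : 𝔸} (h : J * A = 0) : J * exp A = J := by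
  have hterm : (fun k : ℕ => J * ((k.factorial : ℝ)⁻¹ • A ^ k)) =
      fun k => if k = 0 then J else 0 := by
    funext k
    cases k with
    | zero => simp
    | succ k =>
      rw [mul_smul_comm, pow_succ', ← mul_assoc, h, zero_mul, smul_zero, if_neg k.succ_ne_zero]
  have hsum := (exp_series_hasSum_exp' (𝕂 := ℝ) A).mul_left J
  rw [hterm] at hsum
  exact hsum.unique (hasSum_ite_eq 0 J)

theorem hasDerivAt_exp_neg_smul (L : 𝔸) (t : ℝ) :
    HasDerivAt (fun u : ℝ => exp ((-u) • L)) (-(L * exp ((-t) • L))) t := by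
  simpa [Function.comp_def] using (hasDerivAt_exp_smul_const' L (-t)).scomp t (hasDerivAt_neg t)

theorem continuous_exp_neg_smul (L : 𝔸) : Continuous fun u : ℝ => exp ((-u) • L) :=
  continuous_iff_continuousAt.2 fun t => (hasDerivAt_exp_neg_smul L t).continuousAt

end ExpSmul

theorem le_mul_exp_of_hasDerivAt_le {f f' : ℝ → ℝ} {κ : ℝ} (hf : ∀ x, HasDerivAt f (f' x) x)
    (hbound : ∀ x, 0 ≤ x → f' x ≤ -κ * f x) {t : ℝ} (ht : 0 ≤ t) :
    f t ≤ f 0 * Real.exp (-κ * t) := by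
  have hgronwall := le_gronwallBound_of_liminf_deriv_right_le (f := f) (f' := f') (δ := f 0) (K := -κ)
    (ε := 0) (a := 0) (b := t) (fun x _ => (hf x).continuousAt.continuousWithinAt)
    (fun x _ r hr => by
      simpa [slope_def_field, div_eq_inv_mul] using
        (hf x).hasDerivWithinAt.liminf_right_slope_le hr)
    le_rfl (fun x hx => by simpa using hbound x hx.1) t ⟨ht, le_rfl⟩
  simpa [gronwallBound_ε0] using hgronwall

theorem exists_pos_mul_norm_sq_le {E : Type*} [NormedAddCommGroup E] [NormedSpace ℝ E]
    [FiniteDimensional ℝ E] {f : E → ℝ} (hf : Continuous f)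
    (hsmul : ∀ (c : ℝ) (x : E), f (c • x) = c ^ 2 * f x) (hpos : ∀ x, x ≠ 0 → 0 < f x) :
    ∃ c > 0, ∀ x, c * ‖x‖ ^ 2 ≤ f x := by
  have hf0 : f 0 = 0 := by simpa using hsmul 0 0
  rcases subsingleton_or_nontrivial E with hE | hE
  · exact ⟨1, one_pos, fun x => by simp [Subsingleton.elim x 0, hf0]⟩
  obtain ⟨x₀, hx₀, hmin⟩ := (isCompact_sphere (0 : E) 1).exists_isMinOn
    (NormedSpace.sphere_nonempty.mpr zero_le_one) hf.continuousOn
  refine ⟨f x₀, hpos x₀ (ne_zero_of_mem_sphere one_ne_zero ⟨x₀, hx₀⟩), fun x => ?_⟩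
  rcases eq_or_ne x 0 with rfl | hx
  · simp [hf0]
  have hx' : 0 < ‖x‖ := norm_pos_iff.mpr hx
  have h : f x₀ ≤ f (‖x‖⁻¹ • x) :=
    hmin (show ‖x‖⁻¹ • x ∈ Metric.sphere (0 : E) 1 by simp [norm_smul, hx'.ne'])
  rwa [hsmul, inv_pow, ← div_eq_inv_mul, le_div_iff₀ (by positivity)] at h

theorem integrableOn_Ici_of_norm_le_mul_exp {g : ℝ → ℝ} (hg : Continuous g) {C κ : ℝ}
    (hκ : 0 < κ) (hle : ∀ t, 0 ≤ t → ‖g t‖ ≤ C * Real.exp (-κ * t)) :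
    MeasureTheory.IntegrableOn g (Set.Ici 0) := by
  rw [integrableOn_Ici_iff_integrableOn_Ioi]
  refine ((exp_neg_integrableOn_Ioi 0 hκ).const_mul C).mono' hg.aestronglyMeasurable ?_
  exact (MeasureTheory.ae_restrict_iff' measurableSet_Ioi).mpr
    (Filter.Eventually.of_forall fun t ht => hle t ht.le)

section Lyapunov

open scoped Matrix.Norms.Frobenius

variable {ι κ : Type*} [Fintype ι] [Fintype κ]

def weightedSqNorm (d : ι → ℝ) (A : Matrix ι κ ℝ) : ℝ := ∑ i, ∑ j, d i * A i j ^ 2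

theorem frobenius_norm_sq (A : Matrix ι κ ℝ) : ‖A‖ ^ 2 = ∑ i, ∑ j, A i j ^ 2 := by
  rw [frobenius_norm_def, ← Real.sqrt_eq_rpow, Real.sq_sqrt (by positivity)]
  simp

theorem sq_norm_le_mul_weightedSqNorm {d : ι → ℝ} (hd : ∀ i, 0 < d i) (A : Matrix ι κ ℝ) :
    ‖A‖ ^ 2 ≤ (∑ i, (d i)⁻¹) * weightedSqNorm d A := by
  rw [frobenius_norm_sq, weightedSqNorm, Finset.mul_sum]
  refine Finset.sum_le_sum fun i _ => ?_
  rw [Finset.mul_sum]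
  refine Finset.sum_le_sum fun j _ => ?_
  have hi : (d i)⁻¹ ≤ ∑ i, (d i)⁻¹ :=
    Finset.single_le_sum (fun i _ => (inv_pos.mpr (hd i)).le) (Finset.mem_univ i)
  calc A i j ^ 2 = (d i)⁻¹ * (d i * A i j ^ 2) := by field_simp [(hd i).ne']
    _ ≤ (∑ i, (d i)⁻¹) * (d i * A i j ^ 2) :=
      mul_le_mul_of_nonneg_right hi (mul_nonneg (hd i).le (sq_nonneg _))

theorem hasDerivAt_weightedSqNorm (d : ι → ℝ) {Φ : ℝ → Matrix ι κ ℝ} {Φ' : Matrix ι κ ℝ}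
    {t : ℝ} (h : HasDerivAt Φ Φ' t) :
    HasDerivAt (fun u => weightedSqNorm d (Φ u)) (2 * ∑ i, ∑ j, d i * Φ t i j * Φ' i j) t := by
  have hentry : ∀ i j, HasDerivAt (fun u => Φ u i j) (Φ' i j) t := fun i j =>
    (entryLinearMap ℝ ℝ i j).toContinuousLinearMap.hasFDerivAt.comp_hasDerivAt t h
  simp only [weightedSqNorm, Finset.mul_sum]
  refine HasDerivAt.fun_sum fun i _ => HasDerivAt.fun_sum fun j _ => ?_
  refine (((hentry i j).pow 2).const_mul (d i)).congr_deriv ?_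
  push_cast
  ring

theorem weightedSqNorm_exp_neg_smul_sub_le [DecidableEq ι] {d : ι → ℝ} {L J : Matrix ι ι ℝ}
    {c : ℝ} (hLJ : L * J = 0) (hJL : J * L = 0) (hJJ : J * J = J)
    (hcoer : ∀ x, J *ᵥ x = 0 → c * ∑ i, d i * x i ^ 2 ≤ 2 * ∑ i, d i * x i * (L *ᵥ x) i)
    {t : ℝ} (ht : 0 ≤ t) :
    weightedSqNorm d (exp ((-t) • L) - J) ≤ weightedSqNorm d (1 - J) * Real.exp (-c * t) := by
  set Φ : ℝ → Matrix ι ι ℝ := fun u => exp ((-u) • L) - J with hΦ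
  -- the closing `rfl` identifies the two (defeq) topologies on matrices that `exp` is taken in
  have hderiv : ∀ u, HasDerivAt Φ (-(L * Φ u)) u := fun u =>
    ((hasDerivAt_exp_neg_smul L u).sub_const J).congr_deriv (by simp [hΦ, mul_sub, hLJ]; rfl)
  have hker : ∀ u, J * Φ u = 0 := fun u => by
    have hJexp : J * exp ((-u) • L) = J :=
      mul_exp_eq_self_of_mul_eq_zero (by rw [mul_smul_comm, hJL, smul_zero])
    rw [hΦ, mul_sub, hJexp, hJJ, sub_self]
  have h0 : Φ 0 = 1 - J := by simp [hΦ]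
  rw [← h0]
  refine le_mul_exp_of_hasDerivAt_le (fun u => hasDerivAt_weightedSqNorm d (hderiv u))
    (fun u _ => ?_) ht
  have hcol : ∀ j, c * ∑ i, d i * Φ u i j ^ 2 ≤ 2 * ∑ i, d i * Φ u i j * (L * Φ u) i j :=
    fun j => hcoer (fun i => Φ u i j) (funext fun i => congrFun (congrFun (hker u) i) j)
  calc 2 * ∑ i, ∑ j, d i * Φ u i j * (-(L * Φ u)) i j
      = -∑ j, 2 * ∑ i, d i * Φ u i j * (L * Φ u) i j := by
        rw [Finset.sum_comm]; simp [Finset.mul_sum, Finset.sum_neg_distrib]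
    _ ≤ -∑ j, c * ∑ i, d i * Φ u i j ^ 2 := neg_le_neg (Finset.sum_le_sum fun j _ => hcol j)
    _ = -c * weightedSqNorm d (Φ u) := by
        rw [weightedSqNorm, Finset.sum_comm, ← Finset.mul_sum, neg_mul]

end Lyapunov

section StationaryProjection

variable {V : Type*} [Fintype V] {d : V → ℝ}

theorem inv_diagonal_of_ne_zero [DecidableEq V] (hd : ∀ i, d i ≠ 0) :
    (diagonal d)⁻¹ = diagonal fun i => (d i)⁻¹ :=
  inv_eq_left_inv (by rw [diagonal_mul_diagonal, ← diagonal_one]; congr 1; ext i; simp [hd i])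

theorem vecMul_inv_diagonal_self [DecidableEq V] (hd : ∀ i, d i ≠ 0) :
    d ᵥ* (diagonal d)⁻¹ = 1 := by
  ext i
  simp [inv_diagonal_of_ne_zero hd, vecMul_diagonal, hd i]

noncomputable def stationaryProjection (d : V → ℝ) : Matrix V V ℝ :=
  vecMulVec 1 ((∑ i, d i)⁻¹ • d)

theorem stationaryProjection_mul_self (hd : ∀ i, 0 < d i) :
    stationaryProjection d * stationaryProjection d = stationaryProjection d := by
  rcases isEmpty_or_nonempty V with hV | hV
  · exact Subsingleton.elim _ _
  have hS : ∑ i, d i ≠ 0 := (Finset.sum_pos (fun i _ => hd i) Finset.univ_nonempty).ne'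
  rw [stationaryProjection, vecMulVec_mul_vecMulVec, smul_dotProduct, dotProduct_one, smul_eq_mul,
    inv_mul_cancel₀ hS, one_smul]

theorem sum_mul_eq_zero_of_stationaryProjection_mulVec_eq_zero (hd : ∀ i, 0 < d i)
    {x : V → ℝ} (hx : stationaryProjection d *ᵥ x = 0) : ∑ i, d i * x i = 0 := by
  rcases isEmpty_or_nonempty V with hV | ⟨⟨i₀⟩⟩
  · simp
  have hS : (∑ i, d i)⁻¹ ≠ 0 :=
    inv_ne_zero (Finset.sum_pos (fun i _ => hd i) ⟨i₀, Finset.mem_univ _⟩).ne'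
  have h := congrFun hx i₀
  simp only [stationaryProjection, vecMulVec_mulVec, smul_dotProduct] at h
  simpa [hS, dotProduct] using h

end StationaryProjection

section Network

variable {V E : Type*}

def incidenceMatrix [DecidableEq V] (s t : E → V) : Matrix V E ℝ :=
  of fun i k => if i = s k then 1 else if i = t k then -1 else 0

def sourceMatrix [DecidableEq V] (s : E → V) : Matrix V E ℝ :=
  of fun i k => if i = s k then 1 else 0

def weightedLaplacian [DecidableEq V] [Fintype E] [DecidableEq E] (s t : E → V) (w : E → ℝ) :
    Matrix V V ℝ :=
  sourceMatrix s * diagonal w * (incidenceMatrix s t)ᵀ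

def dirichletEnergy [Fintype E] (s t : E → V) (w : E → ℝ) (x : V → ℝ) : ℝ :=
  ∑ k, w k * (x (s k) - x (t k)) ^ 2

variable {s t : E → V} {w : E → ℝ}

theorem eq_of_forall_edge_eq {α : Type*}
    (hconn : ∀ i j, Relation.ReflTransGen (fun a b => ∃ k, s k = a ∧ t k = b) i j)
    {x : V → α} (hx : ∀ k, x (s k) = x (t k)) (i j : V) : x i = x j := by
  induction hconn i j with
  | refl => rfl
  | tail _ hedge ih =>
    obtain ⟨k, rfl, rfl⟩ := hedge
    rw [ih, hx]

variable [Fintype V] [DecidableEq V]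

theorem incidenceMatrix_transpose_mulVec (hst : ∀ k, s k ≠ t k) (f : V → ℝ) :
    (incidenceMatrix s t)ᵀ *ᵥ f = fun k => f (s k) - f (t k) := by
  ext k
  rw [mulVec, dotProduct, Fintype.sum_eq_add (s k) (t k) (hst k) fun i hi => by
    simp [incidenceMatrix, hi.1, hi.2]]
  simp [incidenceMatrix, (hst k).symm]
  ring

theorem sourceMatrix_transpose_mulVec (x : V → ℝ) :
    (sourceMatrix s)ᵀ *ᵥ x = fun k => x (s k) := by
  ext k
  simp [sourceMatrix, mulVec, dotProduct]

theorem one_vecMul_sourceMatrix : (1 : V → ℝ) ᵥ* sourceMatrix s = 1 := by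
  ext k
  simp [sourceMatrix, vecMul, dotProduct]

variable [Fintype E]

theorem sum_mul_sub_eq_zero_of_balanced (hst : ∀ k, s k ≠ t k)
    (hbal : incidenceMatrix s t *ᵥ w = 0) (f : V → ℝ) :
    ∑ k, w k * (f (s k) - f (t k)) = 0 := by
  have h : (incidenceMatrix s t)ᵀ *ᵥ f ⬝ᵥ w = 0 := by
    rw [mulVec_transpose, ← dotProduct_mulVec, hbal, dotProduct_zero]
  rw [incidenceMatrix_transpose_mulVec hst, dotProduct] at h
  simpa only [mul_comm] using h

variable [DecidableEq E]

theorem weightedLaplacian_mulVec_one (hst : ∀ k, s k ≠ t k) :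
    weightedLaplacian s t w *ᵥ 1 = 0 := by
  have h : (incidenceMatrix s t)ᵀ *ᵥ (1 : V → ℝ) = 0 := by
    rw [incidenceMatrix_transpose_mulVec hst]; ext; simp
  rw [weightedLaplacian, ← mulVec_mulVec, h, mulVec_zero]

theorem one_vecMul_weightedLaplacian (hbal : incidenceMatrix s t *ᵥ w = 0) :
    (1 : V → ℝ) ᵥ* weightedLaplacian s t w = 0 := by
  have h : (1 : E → ℝ) ᵥ* diagonal w = w := by ext; simp [vecMul_diagonal]
  rw [weightedLaplacian, ← vecMul_vecMul, ← vecMul_vecMul, one_vecMul_sourceMatrix, h,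
    vecMul_transpose, hbal]

theorem two_mul_dotProduct_weightedLaplacian_mulVec (hst : ∀ k, s k ≠ t k)
    (hbal : incidenceMatrix s t *ᵥ w = 0) (x : V → ℝ) :
    2 * (x ⬝ᵥ weightedLaplacian s t w *ᵥ x) = dirichletEnergy s t w x := by
  have h : x ⬝ᵥ weightedLaplacian s t w *ᵥ x = ∑ k, w k * (x (s k) * (x (s k) - x (t k))) := by
    rw [weightedLaplacian, ← mulVec_mulVec, ← mulVec_mulVec, dotProduct_mulVec,
      ← mulVec_transpose, sourceMatrix_transpose_mulVec, incidenceMatrix_transpose_mulVec hst]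
    simp [dotProduct, mulVec_diagonal, mul_left_comm]
  have hsq := sum_mul_sub_eq_zero_of_balanced hst hbal fun i => x i ^ 2
  rw [h, dirichletEnergy, Finset.mul_sum, ← sub_eq_zero, ← Finset.sum_sub_distrib, ← hsq]
  exact Finset.sum_congr rfl fun k _ => by ring

end Network

section DirichletEnergy

variable {V E : Type*} [Fintype E] {s t : E → V} {w : E → ℝ}

theorem dirichletEnergy_nonneg (hw : ∀ k, 0 < w k) (x : V → ℝ) :
    0 ≤ dirichletEnergy s t w x :=
  Finset.sum_nonneg fun k _ => mul_nonneg (hw k).le (sq_nonneg _)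

theorem dirichletEnergy_smul (a : ℝ) (x : V → ℝ) :
    dirichletEnergy s t w (a • x) = a ^ 2 * dirichletEnergy s t w x := by
  simp only [dirichletEnergy, Pi.smul_apply, smul_eq_mul, ← mul_sub, mul_pow, Finset.mul_sum]
  exact Finset.sum_congr rfl fun k _ => by ring

variable [Fintype V] {d : V → ℝ}

theorem dirichletEnergy_add_sq_pos (hw : ∀ k, 0 < w k)
    (hconn : ∀ i j, Relation.ReflTransGen (fun a b => ∃ k, s k = a ∧ t k = b) i j)
    (hd : ∀ i, 0 < d i) {x : V → ℝ} (hx : x ≠ 0) :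
    0 < dirichletEnergy s t w x + (∑ i, d i * x i) ^ 2 := by
  have hE := dirichletEnergy_nonneg (s := s) (t := t) hw x
  refine (add_nonneg hE (sq_nonneg _)).lt_of_ne fun h => hx ?_
  obtain ⟨hedges, hmass⟩ := (add_eq_zero_iff_of_nonneg hE (sq_nonneg _)).mp h.symm
  have hconst : ∀ i j, x i = x j := eq_of_forall_edge_eq hconn fun k => by
    have := (Finset.sum_eq_zero_iff_of_nonneg fun k _ => mul_nonneg (hw k).le (sq_nonneg _)).mp
      hedges k (Finset.mem_univ k)
    simpa [(hw k).ne', sub_eq_zero] using this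
  ext i₀
  have hS : 0 < ∑ i, d i := Finset.sum_pos (fun i _ => hd i) ⟨i₀, Finset.mem_univ i₀⟩
  rw [Finset.sum_congr rfl fun i _ => by rw [hconst i i₀], ← Finset.sum_mul,
    sq_eq_zero_iff] at hmass
  exact (mul_eq_zero.mp hmass).resolve_left hS.ne'

theorem exists_pos_mul_le_dirichletEnergy (hw : ∀ k, 0 < w k)
    (hconn : ∀ i j, Relation.ReflTransGen (fun a b => ∃ k, s k = a ∧ t k = b) i j)
    (hd : ∀ i, 0 < d i) :
    ∃ c > 0, ∀ x : V → ℝ, ∑ i, d i * x i = 0 →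
      c * ∑ i, d i * x i ^ 2 ≤ dirichletEnergy s t w x := by
  -- adding `(∑ i, d i * x i) ^ 2` makes the form positive definite on all of `V → ℝ`
  obtain ⟨c, hc, hcf⟩ := exists_pos_mul_norm_sq_le
    (f := fun x => dirichletEnergy s t w x + (∑ i, d i * x i) ^ 2)
    (by unfold dirichletEnergy; fun_prop)
    (fun a x => by
      simp only [dirichletEnergy_smul, Pi.smul_apply, smul_eq_mul, mul_left_comm _ a,
        ← Finset.mul_sum]
      ring)
    fun x hx => dirichletEnergy_add_sq_pos hw hconn hd hx
  have hS : 0 < 1 + ∑ i, d i :=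
    add_pos_of_pos_of_nonneg one_pos (Finset.sum_nonneg fun i _ => (hd i).le)
  refine ⟨c / (1 + ∑ i, d i), div_pos hc hS, fun x hx => ?_⟩
  have hcoord : ∀ i, x i ^ 2 ≤ ‖x‖ ^ 2 := fun i => by
    simpa [Real.norm_eq_abs, sq_abs] using
      pow_le_pow_left₀ (norm_nonneg _) (norm_le_pi_norm x i) 2
  have hnorm : ∑ i, d i * x i ^ 2 ≤ (1 + ∑ i, d i) * ‖x‖ ^ 2 :=
    calc ∑ i, d i * x i ^ 2 ≤ ∑ i, d i * ‖x‖ ^ 2 :=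
          Finset.sum_le_sum fun i _ => mul_le_mul_of_nonneg_left (hcoord i) (hd i).le
      _ ≤ (1 + ∑ i, d i) * ‖x‖ ^ 2 := by
          rw [← Finset.sum_mul]; gcongr; exact le_add_of_nonneg_left zero_le_one
  calc c / (1 + ∑ i, d i) * ∑ i, d i * x i ^ 2
      ≤ c / (1 + ∑ i, d i) * ((1 + ∑ i, d i) * ‖x‖ ^ 2) :=
        mul_le_mul_of_nonneg_left hnorm (div_pos hc hS).le
    _ = c * ‖x‖ ^ 2 := by field_simp [hS.ne']
    _ ≤ dirichletEnergy s t w x := by simpa [hx] using hcf x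

end DirichletEnergy

section NormalizedLaplacian

variable {V E : Type*} [Fintype V] [DecidableEq V] [Fintype E] [DecidableEq E]
  {s t : E → V} {w : E → ℝ} {d : V → ℝ}

theorem normalizedLaplacian_mul_stationaryProjection (hst : ∀ k, s k ≠ t k) :
    (diagonal d)⁻¹ * weightedLaplacian s t w * stationaryProjection d = 0 := by
  rw [stationaryProjection, mul_vecMulVec, ← mulVec_mulVec, weightedLaplacian_mulVec_one hst,
    mulVec_zero, zero_vecMulVec]

theorem stationaryProjection_mul_normalizedLaplacian (hbal : incidenceMatrix s t *ᵥ w = 0)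
    (hd : ∀ i, 0 < d i) :
    stationaryProjection d * ((diagonal d)⁻¹ * weightedLaplacian s t w) = 0 := by
  rw [stationaryProjection, vecMulVec_mul, smul_vecMul, ← vecMul_vecMul,
    vecMul_inv_diagonal_self fun i => (hd i).ne', one_vecMul_weightedLaplacian hbal, smul_zero,
    vecMulVec_zero]

theorem sum_mul_mul_normalizedLaplacian_mulVec (hd : ∀ i, 0 < d i) (x : V → ℝ) :
    ∑ i, d i * x i * (((diagonal d)⁻¹ * weightedLaplacian s t w) *ᵥ x) i =
      x ⬝ᵥ weightedLaplacian s t w *ᵥ x := by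
  rw [← mulVec_mulVec, inv_diagonal_of_ne_zero fun i => (hd i).ne', dotProduct]
  refine Finset.sum_congr rfl fun i _ => ?_
  rw [mulVec_diagonal]
  field_simp [(hd i).ne']

open scoped Matrix.Norms.Frobenius in
theorem integrableOn_sq_norm_exp_neg_smul_normalizedLaplacian_sub (hst : ∀ k, s k ≠ t k)
    (hw : ∀ k, 0 < w k)
    (hconn : ∀ i j, Relation.ReflTransGen (fun a b => ∃ k, s k = a ∧ t k = b) i j)
    (hbal : incidenceMatrix s t *ᵥ w = 0) (hd : ∀ i, 0 < d i) :
    MeasureTheory.IntegrableOn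
      (fun τ : ℝ => ‖exp ((-τ) • ((diagonal d)⁻¹ * weightedLaplacian s t w)) -
        stationaryProjection d‖ ^ 2) (Set.Ici 0) := by
  obtain ⟨c, hc, hcoer⟩ := exists_pos_mul_le_dirichletEnergy hw hconn hd
  set L := (diagonal d)⁻¹ * weightedLaplacian s t w
  set J := stationaryProjection d
  have hcoerL : ∀ x, J *ᵥ x = 0 → c * ∑ i, d i * x i ^ 2 ≤ 2 * ∑ i, d i * x i * (L *ᵥ x) i :=
    fun x hx => by
      rw [sum_mul_mul_normalizedLaplacian_mulVec hd,
        two_mul_dotProduct_weightedLaplacian_mulVec hst hbal]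
      exact hcoer x (sum_mul_eq_zero_of_stationaryProjection_mulVec_eq_zero hd hx)
  have hdecay := fun τ (hτ : 0 ≤ τ) => weightedSqNorm_exp_neg_smul_sub_le
    (normalizedLaplacian_mul_stationaryProjection hst)
    (stationaryProjection_mul_normalizedLaplacian hbal hd) (stationaryProjection_mul_self hd)
    hcoerL hτ
  refine integrableOn_Ici_of_norm_le_mul_exp
    (((continuous_exp_neg_smul L).sub continuous_const).norm.pow 2) hc
    (C := (∑ i, (d i)⁻¹) * weightedSqNorm d (1 - J)) fun τ hτ => ?_
  rw [Real.norm_of_nonneg (by positivity), mul_assoc]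
  exact (sq_norm_le_mul_weightedSqNorm hd _).trans (mul_le_mul_of_nonneg_left (hdecay τ hτ)
    (Finset.sum_nonneg fun i _ => (inv_pos.mpr (hd i)).le))

end NormalizedLaplacian

section Clustering

variable {V W : Type*} [DecidableEq W] {c : V → W}

def clusterMatrix (c : V → W) : Matrix V W ℝ :=
  of fun i a => if c i = a then 1 else 0

theorem clusterMatrix_mulVec_one [Fintype W] : clusterMatrix c *ᵥ 1 = 1 := by
  ext i
  simp [clusterMatrix, mulVec, dotProduct]

variable [Fintype V]

theorem transpose_clusterMatrix_mul_diagonal_mul_clusterMatrix [DecidableEq V] (d : V → ℝ) :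
    (clusterMatrix c)ᵀ * diagonal d * clusterMatrix c = diagonal ((clusterMatrix c)ᵀ *ᵥ d) := by
  ext a b
  rw [mul_apply]
  simp only [mul_diagonal, diagonal_apply, transpose_apply, clusterMatrix, of_apply, mulVec,
    dotProduct]
  by_cases hab : a = b
  · subst hab
    simp +contextual
  · simp +contextual [hab, Ne.symm hab]

theorem transpose_clusterMatrix_mulVec_pos (hc : Function.Surjective c) {d : V → ℝ}
    (hd : ∀ i, 0 < d i) (a : W) : 0 < ((clusterMatrix c)ᵀ *ᵥ d) a := by
  obtain ⟨i, rfl⟩ := hc a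
  refine Finset.sum_pos' (fun j _ => mul_nonneg ?_ (hd j).le) ⟨i, Finset.mem_univ i, by
    simp [clusterMatrix, hd i]⟩
  simp only [transpose_apply, clusterMatrix, of_apply]
  positivity

variable [Fintype W]

theorem sum_transpose_clusterMatrix_mulVec (d : V → ℝ) :
    ∑ a, ((clusterMatrix c)ᵀ *ᵥ d) a = ∑ i, d i := by
  rw [← one_dotProduct, dotProduct_mulVec, vecMul_transpose, clusterMatrix_mulVec_one,
    one_dotProduct]

theorem mul_stationaryProjection_mul_eq_clustered [DecidableEq V] (hc : Function.Surjective c)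
    {d : V → ℝ} (hd : ∀ i, 0 < d i) {ι κ : Type*} (H : Matrix ι V ℝ) (F : Matrix V κ ℝ) :
    H * stationaryProjection d * F =
      H * clusterMatrix c * stationaryProjection ((clusterMatrix c)ᵀ *ᵥ d) *
        ((diagonal ((clusterMatrix c)ᵀ *ᵥ d))⁻¹ * (clusterMatrix c)ᵀ * (diagonal d * F)) := by
  have h1 : (1 : W → ℝ) ᵥ* (clusterMatrix c)ᵀ = 1 := by
    rw [vecMul_transpose, clusterMatrix_mulVec_one]
  have h2 : (1 : V → ℝ) ᵥ* diagonal d = d := by ext; simp [vecMul_diagonal]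
  simp only [stationaryProjection, Matrix.mul_assoc, vecMulVec_mul, mul_vecMulVec,
    clusterMatrix_mulVec_one, smul_vecMul, ← vecMul_vecMul, h1, h2,
    vecMul_inv_diagonal_self fun a => (transpose_clusterMatrix_mulVec_pos hc hd a).ne',
    sum_transpose_clusterMatrix_mulVec, ← mulVec_mulVec]

end Clustering

section ErrorSystem

open scoped Matrix.Norms.Frobenius

variable {n r p q : Type*} [Fintype n] [DecidableEq n] [Fintype r] [DecidableEq r]
  [Fintype p] [Fintype q]

theorem frobenius_norm_mul_mul_le {m : Type*} [Fintype m] (A : Matrix q m ℝ) (X : Matrix m m ℝ)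
    (B : Matrix m p ℝ) : ‖A * X * B‖ ≤ ‖A‖ * ‖X‖ * ‖B‖ :=
  (frobenius_norm_mul _ B).trans
    (mul_le_mul_of_nonneg_right (frobenius_norm_mul A X) (norm_nonneg B))

theorem sq_norm_mul_mul_sub_mul_mul_le (H : Matrix q n ℝ) (Φ : Matrix n n ℝ) (F : Matrix n p ℝ)
    (H' : Matrix q r ℝ) (Ψ : Matrix r r ℝ) (F' : Matrix r p ℝ) :
    ‖H * Φ * F - H' * Ψ * F'‖ ^ 2 ≤
      2 * (‖H‖ * ‖F‖) ^ 2 * ‖Φ‖ ^ 2 + 2 * (‖H'‖ * ‖F'‖) ^ 2 * ‖Ψ‖ ^ 2 :=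
  calc ‖H * Φ * F - H' * Ψ * F'‖ ^ 2 ≤ (‖H * Φ * F‖ + ‖H' * Ψ * F'‖) ^ 2 := by
        gcongr; exact norm_sub_le _ _
    _ ≤ 2 * (‖H * Φ * F‖ ^ 2 + ‖H' * Ψ * F'‖ ^ 2) := add_sq_le
    _ ≤ 2 * ((‖H‖ * ‖Φ‖ * ‖F‖) ^ 2 + (‖H'‖ * ‖Ψ‖ * ‖F'‖) ^ 2) := by
        gcongr <;> exact frobenius_norm_mul_mul_le _ _ _
    _ = _ := by ring

theorem integrableOn_sq_norm_mul_exp_mul_sub {L J : Matrix n n ℝ} {L' J' : Matrix r r ℝ}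
    (hL : MeasureTheory.IntegrableOn (fun τ : ℝ => ‖exp ((-τ) • L) - J‖ ^ 2) (Set.Ici 0))
    (hL' : MeasureTheory.IntegrableOn (fun τ : ℝ => ‖exp ((-τ) • L') - J'‖ ^ 2) (Set.Ici 0))
    {H : Matrix q n ℝ} {F : Matrix n p ℝ} {H' : Matrix q r ℝ} {F' : Matrix r p ℝ}
    (hsteady : H * J * F = H' * J' * F') :
    MeasureTheory.IntegrableOn
      (fun τ : ℝ => ‖H * exp ((-τ) • L) * F - H' * exp ((-τ) • L') * F'‖ ^ 2) (Set.Ici 0) := by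
  have hcont : Continuous fun τ : ℝ =>
      ‖H * exp ((-τ) • L) * F - H' * exp ((-τ) • L') * F'‖ ^ 2 :=
    (((continuous_const.matrix_mul (continuous_exp_neg_smul L)).matrix_mul continuous_const).sub
      ((continuous_const.matrix_mul (continuous_exp_neg_smul L')).matrix_mul
        continuous_const)).norm.pow 2
  refine ((hL.const_mul (2 * (‖H‖ * ‖F‖) ^ 2)).add
    (hL'.const_mul (2 * (‖H'‖ * ‖F'‖) ^ 2))).mono' hcont.aestronglyMeasurable
    (Filter.Eventually.of_forall fun τ => ?_)
  have herr : H * exp ((-τ) • L) * F - H' * exp ((-τ) • L') * F' =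
      H * (exp ((-τ) • L) - J) * F - H' * (exp ((-τ) • L') - J') * F' := by
    rw [Matrix.mul_sub, Matrix.sub_mul, Matrix.mul_sub, Matrix.sub_mul, hsteady]; abel
  rw [Real.norm_of_nonneg (by positivity), herr]
  exact sq_norm_mul_mul_sub_mul_mul_le _ _ _ _ _ _

end ErrorSystem

/-- For any clustering of a strongly connected, balanced diffusively coupled
network and any admissible (balanced, positive) choice of reduced edge weights, the
impulse-response error between the original and reduced network systems is
square-integrable on `[0, ∞)`, i.e. the error system belongs to `H₂`. -/
theorem error_system_in_H2
    -- original network: a strongly connected, balanced weighted digraph on `n` vertices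
    (n m p q r : ℕ) (s t : Fin m → Fin n) (hst : ∀ k, s k ≠ t k)
    (w : Fin m → ℝ) (hw : ∀ k, 0 < w k)
    (hconn : ∀ i j : Fin n, Relation.ReflTransGen (fun a b => ∃ k, s k = a ∧ t k = b) i j)
    (B B₀ : Matrix (Fin n) (Fin m) ℝ)
    (hB : ∀ i k, B i k = if i = s k then 1 else if i = t k then -1 else 0)
    (hB₀ : ∀ i k, B₀ i k = if i = s k then 1 else 0)
    (hbal : B.mulVec w = 0)
    (Lb : Matrix (Fin n) (Fin n) ℝ) (hLb : Lb = B₀ * Matrix.diagonal w * Bᵀ)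
    (d : Fin n → ℝ) (hd : ∀ i, 0 < d i)
    (M : Matrix (Fin n) (Fin n) ℝ) (hM : M = Matrix.diagonal d)
    (L : Matrix (Fin n) (Fin n) ℝ) (hL : L = M⁻¹ * Lb)
    (F : Matrix (Fin n) (Fin p) ℝ) (H : Matrix (Fin q) (Fin n) ℝ)
    -- the clustering and the reduced input/output matrices
    (c : Fin n → Fin r) (hc : Function.Surjective c)
    (Pi : Matrix (Fin n) (Fin r) ℝ)
    (hPi : ∀ i a, Pi i a = if c i = a then 1 else 0)
    (Mhat : Matrix (Fin r) (Fin r) ℝ) (hMhat : Mhat = Piᵀ * M * Pi)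
    (Fhat : Matrix (Fin r) (Fin p) ℝ) (hFhat : Fhat = Mhat⁻¹ * Piᵀ * (M * F))
    (Hhat : Matrix (Fin q) (Fin r) ℝ) (hHhat : Hhat = H * Pi)
    -- reduced network: a strongly connected, balanced weighted digraph on `r` vertices
    (mr : ℕ) (sr tr : Fin mr → Fin r) (hstr : ∀ k, sr k ≠ tr k)
    (what : Fin mr → ℝ) (hwhat : ∀ k, 0 < what k)
    (hconnr : ∀ i j : Fin r, Relation.ReflTransGen (fun a b => ∃ k, sr k = a ∧ tr k = b) i j)
    (Bhat Bhat₀ : Matrix (Fin r) (Fin mr) ℝ)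
    (hBhat : ∀ i k, Bhat i k = if i = sr k then 1 else if i = tr k then -1 else 0)
    (hBhat₀ : ∀ i k, Bhat₀ i k = if i = sr k then 1 else 0)
    (hbalr : Bhat.mulVec what = 0)
    (Lbhat : Matrix (Fin r) (Fin r) ℝ)
    (hLbhat : Lbhat = Bhat₀ * Matrix.diagonal what * Bhatᵀ)
    (Lhat : Matrix (Fin r) (Fin r) ℝ) (hLhat : Lhat = Mhat⁻¹ * Lbhat) :
    MeasureTheory.IntegrableOn
      (fun τ : ℝ =>
        ‖H * NormedSpace.exp ((-τ) • L) * F - Hhat * NormedSpace.exp ((-τ) • Lhat) * Fhat‖ ^ 2)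
      (Set.Ici 0) := by
  obtain rfl : B = incidenceMatrix s t := Matrix.ext hB
  obtain rfl : B₀ = sourceMatrix s := Matrix.ext hB₀
  obtain rfl : Bhat = incidenceMatrix sr tr := Matrix.ext hBhat
  obtain rfl : Bhat₀ = sourceMatrix sr := Matrix.ext hBhat₀
  obtain rfl : Pi = clusterMatrix c := Matrix.ext hPi
  rw [hM, transpose_clusterMatrix_mul_diagonal_mul_clusterMatrix] at hMhat
  subst hLb hM hL hMhat hFhat hHhat hLbhat hLhat
  exact integrableOn_sq_norm_mul_exp_mul_sub
    (integrableOn_sq_norm_exp_neg_smul_normalizedLaplacian_sub hst hw hconn hbal hd)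
    (integrableOn_sq_norm_exp_neg_smul_normalizedLaplacian_sub hstr hwhat hconnr hbalr
      (transpose_clusterMatrix_mulVec_pos hc hd))
    (mul_stationaryProjection_mul_eq_clustered hc hd H F)
end

section
/- Let a weighted directed graph on r vertices be strongly connected with strictly positive weights ŵ, incidence matrices B̂, B̂₀, and let M̂ : Matrix (Fin r) (Fin r) ℝ be diagonal with strictly positive diagonal entries. Set L̂ = M̂⁻¹ * B̂₀ * Matrix.diagonal ŵ * B̂ᵀ. Then the reduced network reaches consensus: for every initial condition x₀ : Fin r → ℝ and all vertices i, j, the difference of trajectories (Matrix.exp ℝ (-t • L̂)).mulVec x₀ evaluated at i minus at j tends to 0 as t → ∞. -/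
/-! The network matrix `L̂` has zero row sums and nonpositive off-diagonal entries, and its
negative off-diagonal entries are exactly the edges of the graph. Hence, for `c` large,
`exp (-τ L̂) = e^{-cτ} exp (τ (c - L̂))` is row-stochastic for `τ ≥ 0`, and strong connectivity
makes `exp (-L̂)` entrywise positive, say `≥ ε`. A row-stochastic matrix with entries `≥ ε`
shrinks the spread `max x - min x` of a vector by the factor `1 - ε`, so by the semigroup
property the spread of the trajectory decays like `(1 - ε) ^ ⌊τ⌋`. -/

open Matrix NormedSpace Filter Topology Finset
open scoped Nat

section Spread

variable {ι : Type*} [Fintype ι] [Nonempty ι]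

noncomputable def spread (x : ι → ℝ) : ℝ :=
  univ.sup' univ_nonempty x - univ.inf' univ_nonempty x

theorem sub_le_spread (x : ι → ℝ) (a b : ι) : x a - x b ≤ spread x :=
  sub_le_sub (le_sup' x (mem_univ a)) (inf'_le x (mem_univ b))

theorem abs_sub_le_spread (x : ι → ℝ) (a b : ι) : |x a - x b| ≤ spread x :=
  abs_sub_le_iff.mpr ⟨sub_le_spread x a b, sub_le_spread x b a⟩

end Spread

namespace Matrix

variable {ι : Type*} [Fintype ι]

theorem apply_le_one_of_sum_eq_one {P : Matrix ι ι ℝ} (hP : ∀ a b, 0 ≤ P a b)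
    (hrow : ∀ a, ∑ b, P a b = 1) (a b : ι) : P a b ≤ 1 :=
  (single_le_sum (fun b _ => hP a b) (mem_univ b)).trans_eq (hrow a)

theorem spread_mulVec_le [Nonempty ι] {P : Matrix ι ι ℝ} {ε : ℝ} (hε : 0 ≤ ε)
    (hP : ∀ a b, ε ≤ P a b) (hrow : ∀ a, ∑ b, P a b = 1) (x : ι → ℝ) :
    spread (P *ᵥ x) ≤ (1 - ε) * spread x := by
  obtain ⟨a, -, ha⟩ := exists_mem_eq_sup' univ_nonempty (P *ᵥ x)
  obtain ⟨b, -, hb⟩ := exists_mem_eq_inf' univ_nonempty (P *ᵥ x)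
  obtain ⟨k, -, hk⟩ := exists_mem_eq_inf' univ_nonempty x
  set S := univ.sup' univ_nonempty x
  set I := univ.inf' univ_nonempty x
  have hle_S : ∀ l, x l ≤ S := fun l => le_sup' x (mem_univ l)
  -- row `a` puts weight at least `ε` on a minimiser `k` of `x`
  have hupper : (P *ᵥ x) a ≤ S - ε * (S - I) := by
    have hmulVec : (P *ᵥ x) a = S - ∑ l, P a l * (S - x l) := by
      simp only [mulVec, dotProduct, mul_sub, sum_sub_distrib, ← sum_mul, hrow, one_mul,
        sub_sub_cancel]
    have hterm : ∀ l, 0 ≤ P a l * (S - x l) := fun l =>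
      mul_nonneg (hε.trans (hP a l)) (sub_nonneg.mpr (hle_S l))
    have := single_le_sum (fun l _ => hterm l) (mem_univ k)
    have := mul_le_mul_of_nonneg_right (hP a k) (sub_nonneg.mpr (hle_S k))
    rw [hmulVec, hk]
    linarith
  have hlower : I ≤ (P *ᵥ x) b :=
    calc I = ∑ l, P b l * I := by rw [← sum_mul, hrow, one_mul]
      _ ≤ ∑ l, P b l * x l := sum_le_sum fun l _ =>
          mul_le_mul_of_nonneg_left (inf'_le x (mem_univ l)) (hε.trans (hP b l))
  rw [spread, spread, ha, hb]
  linarith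

variable [DecidableEq ι]

theorem hasSum_exp (N : Matrix ι ι ℝ) :
    HasSum (fun n : ℕ => (n ! : ℝ)⁻¹ • N ^ n) (exp N) := by
  open scoped Norms.Operator in exact exp_series_hasSum_exp' N

theorem hasSum_exp_apply (N : Matrix ι ι ℝ) (a b : ι) :
    HasSum (fun n : ℕ => (n ! : ℝ)⁻¹ * (N ^ n) a b) (exp N a b) :=
  Pi.hasSum.mp (Pi.hasSum.mp (hasSum_exp N) a) b

theorem exp_apply_nonneg {N : Matrix ι ι ℝ} (hN : ∀ a b, 0 ≤ N a b) (a b : ι) :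
    0 ≤ exp N a b :=
  (hasSum_exp_apply N a b).nonneg fun n => by have := pow_apply_nonneg hN n a b; positivity

theorem inv_factorial_mul_pow_apply_le_exp_apply {N : Matrix ι ι ℝ} (hN : ∀ a b, 0 ≤ N a b)
    (n : ℕ) (a b : ι) : (n ! : ℝ)⁻¹ * (N ^ n) a b ≤ exp N a b :=
  le_hasSum (hasSum_exp_apply N a b) n fun m _ => by
    have := pow_apply_nonneg hN m a b; positivity

theorem exists_pow_apply_pos_of_reflTransGen {N : Matrix ι ι ℝ} (hN : ∀ a b, 0 ≤ N a b)
    {a b : ι} (h : Relation.ReflTransGen (fun a b => 0 < N a b) a b) :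
    ∃ n, 0 < (N ^ n) a b := by
  induction h with
  | refl => exact ⟨0, by simp⟩
  | @tail c d _ hcd ih =>
    obtain ⟨n, hn⟩ := ih
    refine ⟨n + 1, ?_⟩
    rw [pow_succ, mul_apply]
    exact Finset.sum_pos' (fun k _ => mul_nonneg (pow_apply_nonneg hN n a k) (hN k d))
      ⟨c, mem_univ c, mul_pos hn hcd⟩

theorem exp_apply_pos_of_reflTransGen {N : Matrix ι ι ℝ} (hN : ∀ a b, 0 ≤ N a b)
    {a b : ι} (h : Relation.ReflTransGen (fun a b => 0 < N a b) a b) : 0 < exp N a b := by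
  obtain ⟨n, hn⟩ := exists_pow_apply_pos_of_reflTransGen hN h
  exact (by positivity : 0 < (n ! : ℝ)⁻¹ * (N ^ n) a b).trans_le
    (inv_factorial_mul_pow_apply_le_exp_apply hN n a b)

theorem exp_mulVec_of_mulVec_eq_zero {L : Matrix ι ι ℝ} {v : ι → ℝ} (h : L *ᵥ v = 0) :
    exp L *ᵥ v = v := by
  have hsum := (hasSum_exp L).map (mulVec.addMonoidHomLeft v)
    (continuous_id.matrix_mulVec continuous_const)
  have hterm : ∀ n, n ≠ 0 → ((n ! : ℝ)⁻¹ • L ^ n) *ᵥ v = 0 := by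
    intro n hn
    obtain ⟨k, rfl⟩ := Nat.exists_eq_succ_of_ne_zero hn
    rw [smul_mulVec, pow_succ, ← mulVec_mulVec, h, mulVec_zero, smul_zero]
  have hsingle := hasSum_single (f := fun n : ℕ => ((n ! : ℝ)⁻¹ • L ^ n) *ᵥ v) 0 hterm
  simp only [Nat.factorial_zero, Nat.cast_one, inv_one, pow_zero, one_smul, one_mulVec]
    at hsingle
  exact hsum.unique hsingle

theorem exp_neg_smul_eq_smul_exp (L : Matrix ι ι ℝ) (c τ : ℝ) :
    exp ((-τ) • L) = Real.exp (-(τ * c)) • exp (τ • (c • (1 : Matrix ι ι ℝ) - L)) := by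
  have hsplit : (-τ) • L = algebraMap ℝ _ (-(τ * c)) + τ • (c • (1 : Matrix ι ι ℝ) - L) := by
    rw [Algebra.algebraMap_eq_smul_one, smul_sub, smul_smul]; module
  have hscalar :
      exp (algebraMap ℝ (Matrix ι ι ℝ) (-(τ * c))) = algebraMap ℝ _ (Real.exp (-(τ * c))) := by
    rw [Real.exp_eq_exp_ℝ]
    open scoped Norms.Operator in exact (algebraMap_exp_comm (𝔸 := Matrix ι ι ℝ) _).symm
  rw [hsplit, exp_add_of_commute _ _ (Algebra.commute_algebraMap_left _ _), hscalar]
  exact (Algebra.smul_def _ _).symm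

theorem exists_smul_one_sub_nonneg {L : Matrix ι ι ℝ} (hL : ∀ a b, a ≠ b → L a b ≤ 0) :
    ∃ c : ℝ, 0 ≤ c ∧ ∀ a b, 0 ≤ (c • (1 : Matrix ι ι ℝ) - L) a b := by
  refine ⟨∑ a, |L a a|, by positivity, fun a b => ?_⟩
  rcases eq_or_ne a b with rfl | hab
  · have := single_le_sum (fun a _ => abs_nonneg (L a a)) (mem_univ a)
    simp only [sub_apply, smul_apply, one_apply_eq, smul_eq_mul, mul_one, sub_nonneg]
    exact (le_abs_self _).trans this
  · simpa [one_apply_ne hab] using hL a b hab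

theorem exp_neg_smul_apply_nonneg {L : Matrix ι ι ℝ} (hL : ∀ a b, a ≠ b → L a b ≤ 0)
    {τ : ℝ} (hτ : 0 ≤ τ) (a b : ι) : 0 ≤ exp ((-τ) • L) a b := by
  obtain ⟨c, -, hc⟩ := exists_smul_one_sub_nonneg hL
  rw [exp_neg_smul_eq_smul_exp L c τ, smul_apply, smul_eq_mul]
  exact mul_nonneg (Real.exp_pos _).le
    (exp_apply_nonneg (fun a b => mul_nonneg hτ (hc a b)) a b)

theorem exp_neg_smul_apply_pos {L : Matrix ι ι ℝ} (hL : ∀ a b, a ≠ b → L a b ≤ 0)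
    (hconn : ∀ a b, Relation.ReflTransGen (fun a b => L a b < 0) a b)
    {τ : ℝ} (hτ : 0 < τ) (a b : ι) : 0 < exp ((-τ) • L) a b := by
  obtain ⟨c, hc₀, hc⟩ := exists_smul_one_sub_nonneg hL
  have hedge : ∀ a b, L a b < 0 → 0 < (τ • (c • (1 : Matrix ι ι ℝ) - L)) a b := fun a b hab => by
    have : 0 ≤ c * (1 : Matrix ι ι ℝ) a b := mul_nonneg hc₀ (by rw [one_apply]; positivity)
    simp only [smul_apply, sub_apply, smul_eq_mul]
    exact mul_pos hτ (by linarith)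
  rw [exp_neg_smul_eq_smul_exp L c τ, smul_apply, smul_eq_mul]
  exact mul_pos (Real.exp_pos _) (exp_apply_pos_of_reflTransGen
    (fun a b => mul_nonneg hτ.le (hc a b)) (Relation.ReflTransGen.mono hedge a b (hconn a b)))

variable {L : Matrix ι ι ℝ}

theorem sum_exp_neg_smul_apply (hrow : L *ᵥ 1 = 0) (τ : ℝ) (a : ι) :
    ∑ b, exp ((-τ) • L) a b = 1 := by
  have h := congrFun (exp_mulVec_of_mulVec_eq_zero
    (by rw [smul_mulVec, hrow, smul_zero] : ((-τ) • L) *ᵥ 1 = 0)) a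
  simpa [mulVec, dotProduct] using h

theorem exp_neg_add_smul (σ τ : ℝ) :
    exp ((-(σ + τ)) • L) = exp ((-σ) • L) * exp ((-τ) • L) := by
  rw [neg_add, add_smul]
  exact Matrix.exp_add_of_commute _ _ (((Commute.refl L).smul_left _).smul_right _)

theorem spread_exp_neg_smul_mulVec_le [Nonempty ι] (hrow : L *ᵥ 1 = 0)
    (hL : ∀ a b, a ≠ b → L a b ≤ 0) {ε : ℝ} (hε : 0 ≤ ε)
    (hP : ∀ a b, ε ≤ exp ((-1 : ℝ) • L) a b) (x : ι → ℝ) (n : ℕ) {ρ : ℝ} (hρ : 0 ≤ ρ) :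
    spread (exp ((-(n + ρ)) • L) *ᵥ x) ≤ (1 - ε) ^ n * spread x := by
  induction n with
  | zero =>
    simpa using spread_mulVec_le le_rfl (exp_neg_smul_apply_nonneg hL hρ)
      (sum_exp_neg_smul_apply hrow ρ) x
  | succ n ih =>
    rw [Nat.cast_succ, add_right_comm, add_comm _ (1 : ℝ), exp_neg_add_smul, ← mulVec_mulVec]
    calc spread (exp ((-1 : ℝ) • L) *ᵥ exp ((-(n + ρ)) • L) *ᵥ x)
        ≤ (1 - ε) * spread (exp ((-(n + ρ)) • L) *ᵥ x) :=
          spread_mulVec_le hε hP (sum_exp_neg_smul_apply hrow 1) _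
      _ ≤ (1 - ε) * ((1 - ε) ^ n * spread x) := by
          have hε₁ : ε ≤ 1 := (hP (Classical.arbitrary ι) (Classical.arbitrary ι)).trans <|
            apply_le_one_of_sum_eq_one (exp_neg_smul_apply_nonneg hL zero_le_one)
              (sum_exp_neg_smul_apply hrow 1) _ _
          exact mul_le_mul_of_nonneg_left ih (sub_nonneg.mpr hε₁)
      _ = (1 - ε) ^ (n + 1) * spread x := by ring

theorem tendsto_exp_neg_smul_mulVec_sub (hrow : L *ᵥ 1 = 0) (hL : ∀ a b, a ≠ b → L a b ≤ 0)
    (hconn : ∀ a b, Relation.ReflTransGen (fun a b => L a b < 0) a b) (x : ι → ℝ) (i j : ι) :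
    Tendsto (fun τ : ℝ => (exp ((-τ) • L) *ᵥ x) i - (exp ((-τ) • L) *ᵥ x) j) atTop (𝓝 0) := by
  have : Nonempty ι := ⟨i⟩
  obtain ⟨⟨a₀, b₀⟩, hmin⟩ := Finite.exists_min fun p : ι × ι => exp ((-1 : ℝ) • L) p.1 p.2
  set ε := exp ((-1 : ℝ) • L) a₀ b₀
  have hε₀ : 0 < ε := exp_neg_smul_apply_pos hL hconn one_pos a₀ b₀
  have hε₁ : ε ≤ 1 := apply_le_one_of_sum_eq_one
    (exp_neg_smul_apply_nonneg hL zero_le_one) (sum_exp_neg_smul_apply hrow 1) a₀ b₀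
  have hbound : ∀ τ : ℝ, 0 ≤ τ → ‖(exp ((-τ) • L) *ᵥ x) i - (exp ((-τ) • L) *ᵥ x) j‖
      ≤ (1 - ε) ^ ⌊τ⌋₊ * spread x := fun τ hτ =>
    calc |(exp ((-τ) • L) *ᵥ x) i - (exp ((-τ) • L) *ᵥ x) j|
        ≤ spread (exp ((-(⌊τ⌋₊ + (τ - ⌊τ⌋₊))) • L) *ᵥ x) := by
          rw [add_sub_cancel]; exact abs_sub_le_spread _ i j
      _ ≤ (1 - ε) ^ ⌊τ⌋₊ * spread x := spread_exp_neg_smul_mulVec_le hrow hL hε₀.le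
          (fun a b => hmin (a, b)) x _ (sub_nonneg.mpr (Nat.floor_le hτ))
  have hlim : Tendsto (fun τ : ℝ => (1 - ε) ^ ⌊τ⌋₊ * spread x) atTop (𝓝 0) := by
    simpa using ((tendsto_pow_atTop_nhds_zero_of_lt_one (by linarith) (by linarith)).comp
      tendsto_nat_floor_atTop).mul_const (spread x)
  exact squeeze_zero_norm' ((eventually_ge_atTop 0).mono hbound) hlim

end Matrix

section ReducedLaplacian

variable {V E : Type*} [DecidableEq V]

def signedIncidence (s t : E → V) : Matrix V E ℝ :=
  of fun i k => if i = s k then 1 else if i = t k then -1 else 0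

def sourceIncidence (s : E → V) : Matrix V E ℝ :=
  of fun i k => if i = s k then 1 else 0

noncomputable def reducedLaplacian [Fintype V] [Fintype E] [DecidableEq E] (d : V → ℝ)
    (w : E → ℝ) (s t : E → V) : Matrix V V ℝ :=
  (diagonal d)⁻¹ * sourceIncidence s * diagonal w * (signedIncidence s t)ᵀ

variable {s t : E → V}

theorem sourceIncidence_mul_signedIncidence_apply {a b : V} (hab : a ≠ b) (k : E) :
    sourceIncidence s a k * signedIncidence s t b k = if s k = a ∧ t k = b then -1 else 0 := by
  by_cases ha : s k = a
  · subst ha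
    simp [sourceIncidence, signedIncidence, hab.symm, eq_comm]
  · simp [sourceIncidence, Ne.symm ha, ha]

theorem signedIncidence_transpose_mulVec_one [Fintype V] (hst : ∀ k, s k ≠ t k) :
    (signedIncidence s t)ᵀ *ᵥ 1 = 0 := by
  ext k
  simp only [mulVec, dotProduct, transpose_apply, Pi.one_apply, mul_one, Pi.zero_apply]
  rw [Fintype.sum_eq_add (s k) (t k) (hst k)]
  · simp [signedIncidence, (hst k).symm]
  · intro i hi
    simp [signedIncidence, hi.1, hi.2]

variable [Fintype V] [Fintype E] [DecidableEq E]

theorem reducedLaplacian_mulVec_one (d : V → ℝ) (w : E → ℝ) (hst : ∀ k, s k ≠ t k) :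
    reducedLaplacian d w s t *ᵥ 1 = 0 := by
  simp only [reducedLaplacian, ← mulVec_mulVec, signedIncidence_transpose_mulVec_one hst,
    mulVec_zero]

theorem reducedLaplacian_apply_of_ne {d : V → ℝ} (hd : ∀ a, d a ≠ 0) (w : E → ℝ) {a b : V}
    (hab : a ≠ b) :
    reducedLaplacian d w s t a b = -((d a)⁻¹ * ∑ k with s k = a ∧ t k = b, w k) := by
  have hinv : (diagonal d)⁻¹ = diagonal d⁻¹ :=
    inv_eq_left_inv (by simp [diagonal_mul_diagonal, inv_mul_cancel₀ (hd _)])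
  calc reducedLaplacian d w s t a b
      = ∑ k, (d a)⁻¹ * (w k * (sourceIncidence s a k * signedIncidence s t b k)) := by
        rw [reducedLaplacian, hinv, mul_apply]
        simp only [mul_diagonal, diagonal_mul, transpose_apply, Pi.inv_apply]
        exact sum_congr rfl fun k _ => by ring
    _ = -((d a)⁻¹ * ∑ k with s k = a ∧ t k = b, w k) := by
        simp only [sourceIncidence_mul_signedIncidence_apply hab, mul_ite, mul_neg, mul_one,
          mul_zero, ← sum_filter, sum_neg_distrib, mul_sum]

theorem reducedLaplacian_apply_nonpos {d : V → ℝ} (hd : ∀ a, 0 < d a) {w : E → ℝ}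
    (hw : ∀ k, 0 ≤ w k) {a b : V} (hab : a ≠ b) : reducedLaplacian d w s t a b ≤ 0 := by
  rw [reducedLaplacian_apply_of_ne (fun a => (hd a).ne') w hab, neg_nonpos]
  exact mul_nonneg (inv_nonneg.mpr (hd a).le) (sum_nonneg fun k _ => hw k)

theorem reducedLaplacian_apply_neg {d : V → ℝ} (hd : ∀ a, 0 < d a) {w : E → ℝ}
    (hw : ∀ k, 0 < w k) {k : E} (hk : s k ≠ t k) :
    reducedLaplacian d w s t (s k) (t k) < 0 := by
  rw [reducedLaplacian_apply_of_ne (fun a => (hd a).ne') w hk, neg_lt_zero]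
  exact mul_pos (inv_pos.mpr (hd _)) (sum_pos (fun k _ => hw k) ⟨k, by simp⟩)

end ReducedLaplacian

/-- A strongly connected reduced network `ẋ = -L̂ x`, where
`L̂ = M̂⁻¹ B̂₀ (diag ŵ) B̂ᵀ` with positive weights and positive diagonal `M̂`, reaches
consensus: for every initial condition the pairwise differences of the trajectory
components tend to zero. -/
theorem reduced_network_reaches_consensus
    (r m : ℕ) (s t : Fin m → Fin r) (hst : ∀ k, s k ≠ t k)
    (what : Fin m → ℝ) (hwhat : ∀ k, 0 < what k)
    (hconn : ∀ i j : Fin r, Relation.ReflTransGen (fun a b => ∃ k, s k = a ∧ t k = b) i j)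
    (Bhat Bhat₀ : Matrix (Fin r) (Fin m) ℝ)
    (hBhat : ∀ i k, Bhat i k = if i = s k then 1 else if i = t k then -1 else 0)
    (hBhat₀ : ∀ i k, Bhat₀ i k = if i = s k then 1 else 0)
    (d : Fin r → ℝ) (hd : ∀ i, 0 < d i)
    (Mhat : Matrix (Fin r) (Fin r) ℝ) (hMhat : Mhat = Matrix.diagonal d)
    (Lhat : Matrix (Fin r) (Fin r) ℝ)
    (hLhat : Lhat = Mhat⁻¹ * Bhat₀ * Matrix.diagonal what * Bhatᵀ) :
    ∀ (x₀ : Fin r → ℝ) (i j : Fin r),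
      Filter.Tendsto
        (fun τ : ℝ =>
          (exp ((-τ) • Lhat)).mulVec x₀ i - (exp ((-τ) • Lhat)).mulVec x₀ j)
        Filter.atTop (nhds 0) := by
  obtain rfl : Bhat = signedIncidence s t := Matrix.ext hBhat
  obtain rfl : Bhat₀ = sourceIncidence s := Matrix.ext hBhat₀
  subst hMhat hLhat
  refine tendsto_exp_neg_smul_mulVec_sub (reducedLaplacian_mulVec_one d what hst)
    (fun a b => reducedLaplacian_apply_nonpos hd fun k => (hwhat k).le) fun i j => ?_
  refine Relation.ReflTransGen.mono ?_ i j (hconn i j)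
  rintro _ _ ⟨k, rfl, rfl⟩
  exact reducedLaplacian_apply_neg hd hwhat (hst k)
end

section
/- Fix matrices Ā : Matrix (Fin N) (Fin N) ℝ, E : Matrix (Fin N) (Fin s) ℝ, Ā_r : Matrix (Fin s) (Fin N) ℝ, B_e : Matrix (Fin N) (Fin p) ℝ, C_e : Matrix (Fin q) (Fin N) ℝ, set A_e = Ā + E * Ā_r, and let γ > 0. Then the following are equivalent. (I) There exist symmetric positive definite Q : Matrix (Fin N) (Fin N) ℝ and R : Matrix (Fin q) (Fin q) ℝ such that the block matrix [[Q*A_e + A_eᵀ*Q, Q*B_e],[B_eᵀ*Q, -1]] is negative definite, the block matrix [[Q, C_eᵀ],[C_e, R]] is positive definite, and Matrix.trace R < γ. (II) There exist symmetric positive definite Q̂ : Matrix (Fin N) (Fin N) ℝ and R̂ : Matrix (Fin q) (Fin q) ℝ and δ̂ > 0 such that the 3×3-block matrix [[Q̂*Ā + Āᵀ*Q̂ - Ā_rᵀ*Ā_r, Q̂*B_e, Q̂*E + Ā_rᵀ],[B_eᵀ*Q̂, -δ̂•1, 0],[Eᵀ*Q̂ + Ā_r, 0, -1]] is negative definite,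 the block matrix [[Q̂, δ̂•C_eᵀ],[δ̂•C_e, R̂]] is positive definite, and Matrix.trace R̂ < δ̂ * γ. -/
/-!
Write `A_e = Ā + E Ā_r`. A Schur complement against the identity block removes the last block
row and column of the bilinear inequality: for symmetric `Q̂` it says
`[[Q̂ A_e + A_eᵀ Q̂ + Q̂ E Eᵀ Q̂, Q̂ B_e], [B_eᵀ Q̂, -δ]] ≺ 0`.
After substituting `Q̂ = δ Q`, `R̂ = δ R` and dividing by `δ`, system (II) is system (I) for
`(Q, R)` with the extra term `δ Q E Eᵀ Q ⪰ 0` in the corner block. Dropping that term gives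
(II) ⇒ (I). Conversely, negative definiteness survives small Hermitian perturbations, so a
certificate of (I) tolerates `δ Q E Eᵀ Q` for some `δ > 0`.
-/

open Matrix

namespace Matrix.PosDef

variable {m n R : Type*} [Fintype m] [Fintype n] [DecidableEq n]
  [CommRing R] [PartialOrder R] [StarRing R] [StarOrderedRing R]

theorem posDef_fromBlocks₂₂_iff (A : Matrix m m R) (B : Matrix m n R) {D : Matrix n n R}
    (hD : D.PosDef) [Invertible D] :
    (fromBlocks A B Bᴴ D).PosDef ↔ (A - B * D⁻¹ * Bᴴ).PosDef := by
  rw [posDef_iff_dotProduct_mulVec, posDef_iff_dotProduct_mulVec,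
    IsHermitian.fromBlocks₂₂ _ _ hD.1]
  refine and_congr_right fun _ => ⟨fun h x hx => ?_, fun h v hv => ?_⟩
  · have hxy : (x ⊕ᵥ -((D⁻¹ * Bᴴ) *ᵥ x)) ≠ 0 := fun h0 =>
      hx (funext fun i => congrFun h0 (Sum.inl i))
    have := h hxy
    rwa [dotProduct_mulVec, schur_complement_eq₂₂ _ _ _ _ hD.1, add_neg_cancel,
      dotProduct_zero, zero_add, ← dotProduct_mulVec] at this
  · rw [dotProduct_mulVec, ← Sum.elim_comp_inl_inr v, schur_complement_eq₂₂ _ _ _ _ hD.1,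
      ← dotProduct_mulVec, ← dotProduct_mulVec]
    by_cases hx : v ∘ Sum.inl = 0
    · have hy : v ∘ Sum.inr ≠ 0 := fun hy =>
        hv (by rw [← Sum.elim_comp_inl_inr v, hx, hy]; ext (i | i) <;> rfl)
      rw [hx, mulVec_zero, zero_add, star_zero, zero_dotProduct, add_zero]
      exact hD.dotProduct_mulVec_pos hy
    · exact add_pos_of_nonneg_of_pos (hD.posSemidef.dotProduct_mulVec_nonneg _) (h hx)

end Matrix.PosDef

section RCLike

open scoped ComplexOrder MatrixOrder

variable {𝕜 n : Type*} [RCLike 𝕜]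

lemma Matrix.posDef_smul_iff {M : Matrix n n 𝕜} {c : ℝ} (hc : 0 < c) :
    (c • M).PosDef ↔ M.PosDef :=
  ⟨fun h => by simpa [smul_smul, hc.ne'] using h.smul (inv_pos.mpr hc), fun h => h.smul hc⟩

lemma Matrix.PosDef.exists_pos_posDef_sub_smul [Fintype n] [DecidableEq n] {X Y : Matrix n n 𝕜}
    (hX : X.PosDef) (hY : Y.IsHermitian) : ∃ δ : ℝ, 0 < δ ∧ (X - δ • Y).PosDef := by
  cases isEmpty_or_nonempty n
  · exact ⟨1, one_pos, .of_dotProduct_mulVec_pos (by ext i; exact isEmptyElim i)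
      fun x hx => absurd (Subsingleton.elim x 0) hx⟩
  obtain ⟨c, hc, hcX⟩ := (CFC.exists_pos_algebraMap_le_iff hX.isHermitian).mpr
    fun _ hx => hX.isStrictlyPositive.spectrum_pos hx
  obtain ⟨K, hK⟩ := (ContinuousFunctionalCalculus.isCompact_spectrum (R := ℝ) Y).bddAbove
  have hYK : Y ≤ algebraMap ℝ _ K := le_algebraMap_of_spectrum_le hK hY
  set δ := c / (2 * (|K| + 1)) with hδ
  have hδpos : 0 < δ := by positivity
  have hδK : δ * K ≤ c / 2 := by
    rw [hδ, div_mul_eq_mul_div, div_le_div_iff₀ (by positivity) two_pos]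
    nlinarith [le_abs_self K, abs_nonneg K]
  refine ⟨δ, hδpos, ?_⟩
  -- `c ≤ X` and `Y ≤ K` in the Loewner order, and `δ K ≤ c / 2` leaves `c / 2 ≤ X - δ Y`.
  have hsplit : X - δ • Y = (c / 2) • (1 : Matrix n n 𝕜) +
      ((X - algebraMap ℝ _ c) + δ • (algebraMap ℝ _ K - Y) + (c / 2 - δ * K) • 1) := by
    simp only [Algebra.algebraMap_eq_smul_one]
    module
  rw [hsplit]
  exact (PosDef.one.smul (by positivity)).add_posSemidef <|
    ((le_iff.mp hcX).add ((le_iff.mp hYK).smul hδpos.le)).add (PosSemidef.one.smul (by linarith))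

end RCLike

section

variable {m n p : Type*} [Fintype m]

lemma fromRows_mul_transpose_fromRows_zero {R : Type*} [Semiring R] (X : Matrix n m R) :
    fromRows X (0 : Matrix p m R) * (fromRows X 0)ᵀ =
      fromBlocks (X * Xᵀ) 0 0 (0 : Matrix p p R) := by
  rw [transpose_fromRows, fromRows_mul_fromCols]
  simp

lemma posSemidef_fromBlocks_mul_transpose_zero [Fintype n] [Fintype p] (X : Matrix n m ℝ) :
    (fromBlocks (X * Xᵀ) 0 0 (0 : Matrix p p ℝ)).PosSemidef := by
  rw [← fromRows_mul_transpose_fromRows_zero, ← conjTranspose_eq_transpose_of_trivial]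
  exact posSemidef_self_mul_conjTranspose _

end

section

variable {n p s : Type*} [Fintype n] [DecidableEq p]

def lyapunovBlock (A : Matrix n n ℝ) (B : Matrix n p ℝ) (Q : Matrix n n ℝ) (c : ℝ) :
    Matrix (n ⊕ p) (n ⊕ p) ℝ :=
  fromBlocks (Q * A + Aᵀ * Q) (Q * B) (Bᵀ * Q) (-(c • 1))

variable [Fintype s]

lemma lyapunovBlock_smul_add (A : Matrix n n ℝ) (B : Matrix n p ℝ) (E : Matrix n s ℝ)
    (Q : Matrix n n ℝ) (δ : ℝ) :
    lyapunovBlock A B (δ • Q) δ + fromBlocks (δ • Q * E * (δ • Q * E)ᵀ) 0 0 0 =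
      δ • (lyapunovBlock A B Q 1 + δ • fromBlocks (Q * E * (Q * E)ᵀ) 0 0 0) := by
  simp only [lyapunovBlock, fromBlocks_smul, fromBlocks_add, smul_add, smul_zero, smul_neg,
    one_smul, transpose_smul, Matrix.smul_mul, Matrix.mul_smul, smul_smul]

lemma posDef_neg_transformed_bmi_iff [Fintype p] [DecidableEq s] (Abar : Matrix n n ℝ)
    (E : Matrix n s ℝ) (Ar : Matrix s n ℝ) (B : Matrix n p ℝ) {Q : Matrix n n ℝ}
    (hQ : Q.IsHermitian) (δ : ℝ) :
    (-(fromBlocks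
        (fromBlocks (Q * Abar + Abarᵀ * Q - Arᵀ * Ar) (Q * B) (Bᵀ * Q) (-(δ • 1)))
        (fromRows (Q * E + Arᵀ) 0) (fromCols (Eᵀ * Q + Ar) 0) (-1))).PosDef ↔
      (-(lyapunovBlock (Abar + E * Ar) B Q δ +
        fromBlocks (Q * E * (Q * E)ᵀ) 0 0 0)).PosDef := by
  have hQt : Qᵀ = Q := hQ
  let _ : Invertible (1 : Matrix s s ℝ) := invertibleOne
  have hH : fromCols (Eᵀ * Q + Ar) (0 : Matrix s p ℝ) = (fromRows (Q * E + Arᵀ) 0)ᴴ := by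
    simp [conjTranspose_eq_transpose_of_trivial, transpose_fromRows, hQt]
  have h11 : Q * Abar + Abarᵀ * Q - Arᵀ * Ar + (Q * E + Arᵀ) * (Q * E + Arᵀ)ᵀ =
      Q * (Abar + E * Ar) + (Abar + E * Ar)ᵀ * Q + Q * E * (Q * E)ᵀ := by
    simp only [transpose_add, transpose_mul, transpose_transpose, hQt, Matrix.add_mul,
      Matrix.mul_add, Matrix.mul_assoc]
    abel
  rw [hH, fromBlocks_neg, ← conjTranspose_neg, neg_neg,
    PosDef.posDef_fromBlocks₂₂_iff _ _ PosDef.one, inv_one, Matrix.mul_one,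
    conjTranspose_eq_transpose_of_trivial, sub_eq_add_neg, ← neg_add, transpose_neg,
    Matrix.neg_mul, Matrix.mul_neg, neg_neg, fromRows_mul_transpose_fromRows_zero,
    lyapunovBlock, fromBlocks_add, fromBlocks_add, h11]

end

theorem h2_lmi_iff_transformed_bmi_general
    (N sd p q : ℕ)
    (Abar : Matrix (Fin N) (Fin N) ℝ) (E : Matrix (Fin N) (Fin sd) ℝ)
    (Ar : Matrix (Fin sd) (Fin N) ℝ)
    (Be : Matrix (Fin N) (Fin p) ℝ) (Ce : Matrix (Fin q) (Fin N) ℝ)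
    (γ : ℝ) :
    (∃ (Q : Matrix (Fin N) (Fin N) ℝ) (R : Matrix (Fin q) (Fin q) ℝ),
      Q.PosDef ∧ R.PosDef ∧
      (-(Matrix.fromBlocks
          (Q * (Abar + E * Ar) + (Abar + E * Ar)ᵀ * Q) (Q * Be)
          (Beᵀ * Q) (-1))).PosDef ∧
      (Matrix.fromBlocks Q Ceᵀ Ce R).PosDef ∧
      Matrix.trace R < γ) ↔
    (∃ (Qh : Matrix (Fin N) (Fin N) ℝ) (Rh : Matrix (Fin q) (Fin q) ℝ) (δ : ℝ),
      Qh.PosDef ∧ Rh.PosDef ∧ 0 < δ ∧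
      (-(Matrix.fromBlocks
          (Matrix.fromBlocks
            (Qh * Abar + Abarᵀ * Qh - Arᵀ * Ar) (Qh * Be)
            (Beᵀ * Qh) (-(δ • (1 : Matrix (Fin p) (Fin p) ℝ))))
          (Matrix.fromRows (Qh * E + Arᵀ) 0)
          (Matrix.fromCols (Eᵀ * Qh + Ar) 0)
          (-1))).PosDef ∧
      (Matrix.fromBlocks Qh (δ • Ceᵀ) (δ • Ce) Rh).PosDef ∧
      Matrix.trace Rh < δ * γ) := by
  have hL (Q : Matrix (Fin N) (Fin N) ℝ) :
      fromBlocks (Q * (Abar + E * Ar) + (Abar + E * Ar)ᵀ * Q) (Q * Be) (Beᵀ * Q) (-1) =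
        lyapunovBlock (Abar + E * Ar) Be Q 1 := by
    rw [lyapunovBlock, one_smul]
  simp only [hL]
  have hEQ (Q : Matrix (Fin N) (Fin N) ℝ) :
      (fromBlocks (Q * E * (Q * E)ᵀ) 0 0 (0 : Matrix (Fin p) (Fin p) ℝ)).PosSemidef :=
    posSemidef_fromBlocks_mul_transpose_zero _
  constructor
  · rintro ⟨Q, R, hQ, hR, hLyap, hC, htr⟩
    obtain ⟨δ, hδ, hδLyap⟩ := hLyap.exists_pos_posDef_sub_smul (hEQ Q).isHermitian
    refine ⟨δ • Q, δ • R, δ, hQ.smul hδ, hR.smul hδ, hδ, ?_, ?_, ?_⟩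
    · rwa [posDef_neg_transformed_bmi_iff _ _ _ _ (hQ.smul hδ).isHermitian,
        lyapunovBlock_smul_add, ← smul_neg, posDef_smul_iff hδ, neg_add, ← sub_eq_add_neg]
    · simpa only [fromBlocks_smul] using hC.smul hδ
    · simpa only [trace_smul, smul_eq_mul] using mul_lt_mul_of_pos_left htr hδ
  · rintro ⟨Qh, Rh, δ, hQh, hRh, hδ, hT, hC, htr⟩
    obtain ⟨Q, rfl⟩ : ∃ Q, Qh = δ • Q := ⟨δ⁻¹ • Qh, (smul_inv_smul₀ hδ.ne' Qh).symm⟩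
    obtain ⟨R, rfl⟩ : ∃ R, Rh = δ • R := ⟨δ⁻¹ • Rh, (smul_inv_smul₀ hδ.ne' Rh).symm⟩
    rw [posDef_neg_transformed_bmi_iff _ _ _ _ hQh.isHermitian, lyapunovBlock_smul_add,
      ← smul_neg, posDef_smul_iff hδ] at hT
    rw [← fromBlocks_smul, posDef_smul_iff hδ] at hC
    rw [trace_smul, smul_eq_mul] at htr
    refine ⟨Q, R, (posDef_smul_iff hδ).mp hQh, (posDef_smul_iff hδ).mp hRh, ?_, hC,
      lt_of_mul_lt_mul_left htr hδ.le⟩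
    simpa using hT.add_posSemidef ((hEQ Q).smul hδ.le)

/-- Theorem 1 of the paper: the standard `H₂`-norm LMI certificate with bound
`γ` for the error system `(A_e, B_e, C_e)`, `A_e = Ā + E Ā_r`, is feasible if and only if the
transformed (bilinear) matrix inequality system is feasible.  Negative definiteness of a
matrix `X` is expressed as `(-X).PosDef`. -/
theorem h2_lmi_iff_transformed_bmi
    (N sd p q : ℕ)
    (Abar : Matrix (Fin N) (Fin N) ℝ) (E : Matrix (Fin N) (Fin sd) ℝ)
    (Ar : Matrix (Fin sd) (Fin N) ℝ)
    (Be : Matrix (Fin N) (Fin p) ℝ) (Ce : Matrix (Fin q) (Fin N) ℝ)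
    (γ : ℝ) (hγ : 0 < γ) :
    (∃ (Q : Matrix (Fin N) (Fin N) ℝ) (R : Matrix (Fin q) (Fin q) ℝ),
      Q.PosDef ∧ R.PosDef ∧
      (-(Matrix.fromBlocks
          (Q * (Abar + E * Ar) + (Abar + E * Ar)ᵀ * Q) (Q * Be)
          (Beᵀ * Q) (-1))).PosDef ∧
      (Matrix.fromBlocks Q Ceᵀ Ce R).PosDef ∧
      Matrix.trace R < γ) ↔
    (∃ (Qh : Matrix (Fin N) (Fin N) ℝ) (Rh : Matrix (Fin q) (Fin q) ℝ) (δ : ℝ),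
      Qh.PosDef ∧ Rh.PosDef ∧ 0 < δ ∧
      (-(Matrix.fromBlocks
          (Matrix.fromBlocks
            (Qh * Abar + Abarᵀ * Qh - Arᵀ * Ar) (Qh * Be)
            (Beᵀ * Qh) (-(δ • (1 : Matrix (Fin p) (Fin p) ℝ))))
          (Matrix.fromRows (Qh * E + Arᵀ) 0)
          (Matrix.fromCols (Eᵀ * Qh + Ar) 0)
          (-1))).PosDef ∧
      (Matrix.fromBlocks Qh (δ • Ceᵀ) (δ • Ce) Rh).PosDef ∧
      Matrix.trace Rh < δ * γ) :=
  h2_lmi_iff_transformed_bmi_general N sd p q Abar E Ar Be Ce γ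
end

section
/- Let X : Matrix (Fin N) (Fin N) ℝ be symmetric and Y : Matrix (Fin N) (Fin s) ℝ. Then X is negative definite if and only if there exists δ > 0 such that the block matrix Matrix.fromBlocks X Y Yᵀ (-δ • 1) is negative definite. -/
/-!
With `D = δ • 1`, the negated block matrix is `fromBlocks (-X) (-Y) (-Y)ᴴ D`, which is positive
definite as soon as its Schur complement `-X - δ⁻¹ • Y * Yᵀ` is. Positive definiteness survives
small perturbations (the quadratic form is bounded below on the compact unit sphere), so this
holds for `δ` large. Conversely `-X` is a principal submatrix of the negated block matrix.
-/

open Matrix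

namespace Matrix

section Schur

variable {m n K : Type*} [Fintype m] [Fintype n] [DecidableEq n]
  [Field K] [PartialOrder K] [StarRing K] [StarOrderedRing K]

theorem PosDef.fromBlocks₂₂_of_posDef_schur {A : Matrix m m K} {B : Matrix m n K}
    {D : Matrix n n K} (hD : D.PosDef) (hS : (A - B * D⁻¹ * Bᴴ).PosDef) :
    (fromBlocks A B Bᴴ D).PosDef := by
  have := hD.isUnit.invertible
  refine .of_dotProduct_mulVec_pos ((IsHermitian.fromBlocks₂₂ A B hD.1).mpr hS.1) fun x hx => ?_
  rw [dotProduct_mulVec, ← Sum.elim_comp_inl_inr x, schur_complement_eq₂₂ A B _ _ hD.1]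
  by_cases hu : x ∘ Sum.inl = 0
  · have hw : x ∘ Sum.inr ≠ 0 := fun hw =>
      hx (by rw [← Sum.elim_comp_inl_inr x, hu, hw]; ext (i | i) <;> rfl)
    simpa [hu, ← dotProduct_mulVec] using hD.dotProduct_mulVec_pos hw
  · rw [← dotProduct_mulVec, ← dotProduct_mulVec]
    exact add_pos_of_nonneg_of_pos (hD.posSemidef.dotProduct_mulVec_nonneg _)
      (hS.dotProduct_mulVec_pos hu)

end Schur

section Real

variable {n : Type*} [Fintype n]

theorem posDef_of_forall_mem_sphere_pos {C : Matrix n n ℝ} (hC : C.IsHermitian)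
    (h : ∀ u ∈ Metric.sphere (0 : n → ℝ) 1, 0 < u ⬝ᵥ C *ᵥ u) : C.PosDef := by
  refine .of_dotProduct_mulVec_pos hC fun x hx => ?_
  have hx' : ‖x‖ ≠ 0 := norm_ne_zero_iff.mpr hx
  have hu := h (‖x‖⁻¹ • x) (by simp [norm_smul, hx'])
  rw [mulVec_smul, dotProduct_smul, smul_dotProduct, smul_eq_mul, smul_eq_mul,
    ← mul_assoc] at hu
  simpa using pos_of_mul_pos_right hu (by positivity)

theorem PosDef.exists_pos_posDef_sub_smul_s11 {A S : Matrix n n ℝ} (hA : A.PosDef)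
    (hS : S.IsHermitian) : ∃ t : ℝ, 0 < t ∧ (A - t • S).PosDef := by
  rcases isEmpty_or_nonempty n with _ | _
  · exact ⟨1, one_pos, by rwa [Subsingleton.elim (A - 1 • S) A]⟩
  have hsphere := isCompact_sphere (0 : n → ℝ) 1
  have hquad (M : Matrix n n ℝ) : Continuous fun u : n → ℝ => u ⬝ᵥ M *ᵥ u := by fun_prop
  obtain ⟨a, ha, hmin⟩ := hsphere.exists_isMinOn (NormedSpace.sphere_nonempty.mpr zero_le_one)
    (hquad A).continuousOn
  obtain ⟨M, hM⟩ := hsphere.bddAbove_image (hquad S).continuousOn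
  set ε := a ⬝ᵥ A *ᵥ a
  have hε : 0 < ε := by
    simpa using hA.dotProduct_mulVec_pos (ne_zero_of_mem_unit_sphere ⟨a, ha⟩)
  refine ⟨ε / (|M| + 1), by positivity,
    posDef_of_forall_mem_sphere_pos (hA.1.sub (hS.smul (.all _))) fun u hu => ?_⟩
  have hAu : ε ≤ u ⬝ᵥ A *ᵥ u := hmin hu
  have hSu : u ⬝ᵥ S *ᵥ u ≤ |M| := (hM ⟨u, hu, rfl⟩).trans (le_abs_self M)
  have hlt : ε / (|M| + 1) * |M| < ε := by
    rw [div_mul_eq_mul_div, div_lt_iff₀ (by positivity)]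
    nlinarith [abs_nonneg M]
  rw [sub_mulVec, dotProduct_sub, smul_mulVec, dotProduct_smul, smul_eq_mul]
  nlinarith [mul_le_mul_of_nonneg_left hSu (by positivity : 0 ≤ ε / (|M| + 1))]

end Real

end Matrix

theorem negDef_iff_exists_augmented_negDef_general
    (N sd : ℕ) (X : Matrix (Fin N) (Fin N) ℝ)
    (Y : Matrix (Fin N) (Fin sd) ℝ) :
    (-X).PosDef ↔
      ∃ δ : ℝ, 0 < δ ∧
        (-(Matrix.fromBlocks X Y Yᵀ
            (-(δ • (1 : Matrix (Fin sd) (Fin sd) ℝ))))).PosDef := by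
  constructor
  · intro hX
    obtain ⟨t, ht, hS⟩ := hX.exists_pos_posDef_sub_smul_s11 (isHermitian_mul_conjTranspose_self Y)
    refine ⟨t⁻¹, inv_pos.mpr ht, ?_⟩
    set D : Matrix (Fin sd) (Fin sd) ℝ := t⁻¹ • 1
    have hD : D.PosDef := PosDef.one.smul (inv_pos.mpr ht)
    have hDinv : D⁻¹ = t • 1 := inv_eq_right_inv (by simp [D, ht.ne'])
    have hschur : -X - -Y * D⁻¹ * (-Y)ᴴ = -X - t • (Y * Yᴴ) := by simp [hDinv]
    have hblocks : -fromBlocks X Y Yᵀ (-D) = fromBlocks (-X) (-Y) (-Y)ᴴ D := by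
      simp [fromBlocks_neg]
    rw [hblocks]
    exact hD.fromBlocks₂₂_of_posDef_schur (hschur ▸ hS)
  · rintro ⟨δ, -, h⟩
    exact h.submatrix Sum.inl_injective

/-- A symmetric matrix `X` is negative definite if and only if for some
`δ > 0` the augmented block matrix `[[X, Y],[Yᵀ, -δI]]` is negative definite.
Negative definiteness of a matrix `Z` is expressed as `(-Z).PosDef`. -/
theorem negDef_iff_exists_augmented_negDef
    (N sd : ℕ) (X : Matrix (Fin N) (Fin N) ℝ) (hX : X.IsSymm)
    (Y : Matrix (Fin N) (Fin sd) ℝ) :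
    (-X).PosDef ↔
      ∃ δ : ℝ, 0 < δ ∧
        (-(Matrix.fromBlocks X Y Yᵀ
            (-(δ • (1 : Matrix (Fin sd) (Fin sd) ℝ))))).PosDef :=
  negDef_iff_exists_augmented_negDef_general N sd X Y
end

section
/- Let V₁ : Matrix (Fin a) (Fin m) ℝ and V₂, W₁, W₂ : Matrix (Fin m) (Fin m) ℝ, and define φ(W) = V₁ * W * V₂ * W * V₁ᵀ. Suppose V₂ is positive semidefinite, W₁ and W₂ are symmetric, and λ ∈ [0,1]. Then φ is psd-convex along the segment: the matrix λ • φ(W₁) + (1-λ) • φ(W₂) - φ(λ • W₁ + (1-λ) • W₂) is positive semidefinite. -/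
open Matrix

/-! Expanding the quadratic map `W ↦ V₁ W V₂ W V₁ᵀ` gives the exact convexity defect
`λφ(W₁) + (1-λ)φ(W₂) - φ(λW₁+(1-λ)W₂) = λ(1-λ) V₁ D V₂ D V₁ᵀ` with `D = W₁ - W₂`.
Since `D` is symmetric this is the congruence `(V₁ D) V₂ (V₁ D)ᵀ` of `V₂`, scaled by
`λ(1-λ) ≥ 0`, hence positive semidefinite. -/

theorem Matrix.smul_add_smul_sub_mul_mul_mul_mul {k l p q R : Type*} [Fintype l] [Fintype p]
    [CommRing R] (A : Matrix k l R) (C : Matrix p l R) (B : Matrix p q R)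
    (X Y : Matrix l p R) (t : R) :
    t • (A * X * C * X * B) + (1 - t) • (A * Y * C * Y * B)
        - A * (t • X + (1 - t) • Y) * C * (t • X + (1 - t) • Y) * B
      = (t * (1 - t)) • (A * (X - Y) * C * (X - Y) * B) := by
  simp only [Matrix.mul_add, Matrix.add_mul, Matrix.mul_sub, Matrix.sub_mul,
    Matrix.mul_smul, Matrix.smul_mul]
  module

/-- if `V₂` is positive semidefinite and `W₁, W₂` are symmetric, the mapping
`φ(W) = V₁ W V₂ W V₁ᵀ` is psd-convex along the segment from `W₂` to `W₁`:
`λφ(W₁) + (1-λ)φ(W₂) - φ(λW₁+(1-λ)W₂)` is positive semidefinite for `λ ∈ [0,1]`. -/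
theorem phi_psd_convex_on_segment
    (a m : ℕ) (V₁ : Matrix (Fin a) (Fin m) ℝ)
    (V₂ W₁ W₂ : Matrix (Fin m) (Fin m) ℝ)
    (hV₂ : V₂.PosSemidef) (hW₁ : W₁.IsSymm) (hW₂ : W₂.IsSymm)
    (φ : Matrix (Fin m) (Fin m) ℝ → Matrix (Fin a) (Fin a) ℝ)
    (hφ : ∀ W, φ W = V₁ * W * V₂ * W * V₁ᵀ)
    (l : ℝ) (hl0 : 0 ≤ l) (hl1 : l ≤ 1) :
    (l • φ W₁ + (1 - l) • φ W₂ - φ (l • W₁ + (1 - l) • W₂)).PosSemidef := by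
  have hD : (V₁ * (W₁ - W₂))ᴴ = (W₁ - W₂) * V₁ᵀ := by
    rw [conjTranspose_mul, conjTranspose_eq_transpose_of_trivial,
      conjTranspose_eq_transpose_of_trivial, (hW₁.sub hW₂).eq]
  have hcongr : (V₁ * (W₁ - W₂) * V₂ * (W₁ - W₂) * V₁ᵀ).PosSemidef := by
    simpa only [hD, Matrix.mul_assoc] using hV₂.mul_mul_conjTranspose_same (V₁ * (W₁ - W₂))
  simp only [hφ]
  rw [smul_add_smul_sub_mul_mul_mul_mul]
  exact hcongr.smul (mul_nonneg hl0 (sub_nonneg.mpr hl1))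
end

section
/- Let V₁ : Matrix (Fin a) (Fin m) ℝ and K : Matrix (Fin c) (Fin m) ℝ, and for a weight vector u : Fin m → ℝ define φ_a(u) = V₁ * Matrix.diagonal u * Kᵀ * K * Matrix.diagonal u * V₁ᵀ. Then φ_a is psd-convex: for all u₁, u₂ : Fin m → ℝ and λ ∈ [0,1], the matrix λ • φ_a(u₁) + (1-λ) • φ_a(u₂) - φ_a(λ • u₁ + (1-λ) • u₂) is positive semidefinite. -/
open Matrix

/-! `φ_a(u) = G(u)ᵀ G(u)` with `G(u) = K (diag u) V₁ᵀ` linear in `u`, and for the Gram map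
`A ↦ Aᴴ A` the Jensen gap is exactly `l (1 - l) (A - B)ᴴ (A - B)`. -/

namespace Matrix

variable {R E F m n : Type*} [CommRing R] [StarRing R]

def PsdConvex [PartialOrder R] [AddCommGroup E] [Module R E] (φ : E → Matrix n n R) : Prop :=
  ∀ (x y : E) (l : R), 0 ≤ l → l ≤ 1 →
    (l • φ x + (1 - l) • φ y - φ (l • x + (1 - l) • y)).PosSemidef

theorem PsdConvex.comp_linearMap [PartialOrder R] [AddCommGroup E] [Module R E]
    [AddCommGroup F] [Module R F] {φ : F → Matrix n n R} (hφ : PsdConvex φ) (G : E →ₗ[R] F) :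
    PsdConvex (φ ∘ G) := by
  intro x y l hl0 hl1
  simpa only [Function.comp_apply, map_add, map_smul] using hφ (G x) (G y) l hl0 hl1

variable [Fintype m]

theorem convexComb_conjTranspose_mul_self_sub {l : R} (hl : IsSelfAdjoint l)
    (A B : Matrix m n R) :
    l • (Aᴴ * A) + (1 - l) • (Bᴴ * B) - (l • A + (1 - l) • B)ᴴ * (l • A + (1 - l) • B)
      = (l * (1 - l)) • ((A - B)ᴴ * (A - B)) := by
  have hl' : star (1 - l) = 1 - l := by rw [star_sub, star_one, hl.star_eq]
  simp only [conjTranspose_add, conjTranspose_smul, conjTranspose_sub, hl.star_eq, hl',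
    Matrix.mul_add, Matrix.add_mul, Matrix.mul_sub, Matrix.sub_mul,
    Matrix.smul_mul, Matrix.mul_smul]
  module

theorem psdConvex_conjTranspose_mul_self [PartialOrder R] [IsOrderedRing R] [StarOrderedRing R]
    [Finite n] : PsdConvex (R := R) (fun A : Matrix m n R => Aᴴ * A) := by
  intro A B l hl0 hl1
  rw [convexComb_conjTranspose_mul_self_sub (.of_nonneg hl0)]
  exact (posSemidef_conjTranspose_mul_self (A - B)).smul (mul_nonneg hl0 (sub_nonneg.2 hl1))

end Matrix

/-- Lemma 4 of the paper: the mapping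
`φ_a(u) = V₁ (diag u) Kᵀ K (diag u) V₁ᵀ` appearing as the nonlinear block `Ā_rᵀ Ā_r` of the
BMI constraint is psd-convex in the weight vector `u`. -/
theorem phi_a_psd_convex
    (a c m : ℕ) (V₁ : Matrix (Fin a) (Fin m) ℝ) (K : Matrix (Fin c) (Fin m) ℝ)
    (φa : (Fin m → ℝ) → Matrix (Fin a) (Fin a) ℝ)
    (hφa : ∀ u, φa u =
      V₁ * Matrix.diagonal u * Kᵀ * K * Matrix.diagonal u * V₁ᵀ) :
    ∀ (u₁ u₂ : Fin m → ℝ) (l : ℝ), 0 ≤ l → l ≤ 1 →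
      (l • φa u₁ + (1 - l) • φa u₂ - φa (l • u₁ + (1 - l) • u₂)).PosSemidef := by
  let G : (Fin m → ℝ) →ₗ[ℝ] Matrix (Fin c) (Fin a) ℝ :=
    mulRightLinearMap (Fin c) ℝ V₁ᵀ ∘ₗ mulLeftLinearMap (Fin m) ℝ K ∘ₗ
      diagonalLinearMap (Fin m) ℝ ℝ
  have hφ : φa = (fun A => Aᴴ * A) ∘ G := funext fun u => by
    simp [hφa, G, conjTranspose_eq_transpose_of_trivial, transpose_mul, Matrix.mul_assoc]
  rw [hφ]
  exact (psdConvex_conjTranspose_mul_self (R := ℝ)).comp_linearMap G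
end
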